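/- arXiv:2302.09798 — 9 statements merged into one kernel-verified Lean document; each statement's English description precedes it below -/
import Mathlib

section
/- Let n ≥ 1 and let x, y be two distinct binary sequences of length n. If |I_1(x) ∩ I_1(y)| = 1, then x and y are Type-B confusable. -/
open List

/-- The `t`-insertion ball of a binary word `x`: all words of length `|x| + t`
containing `x` as a (not necessarily contiguous) subsequence. -/
def insBall (t : ℕ) (x : List Bool) : Set (List Bool) :=
  {z | z.length = x.length + t ∧ x.Sublist z}

/-- Componentwise complement of a binary word. -/
def bcompl (w : List Bool) : List Bool := w.map (fun c => !c)

/-- `wpow p i` is the concatenation of `i` copies of the word `p`. -/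
def wpow (p : List Bool) (i : ℕ) : List Bool := (List.replicate i p).flatten

/-- `w` is an alternating word of length at least 1:
`w = (a ā)^i` with `i ≥ 1`, or `w = (a ā)^j a` with `j ≥ 0`. -/
def IsAlt (w : List Bool) : Prop :=
  ∃ a : Bool, (∃ i, 1 ≤ i ∧ w = wpow [a, !a] i) ∨ (∃ j, w = wpow [a, !a] j ++ [a])

/-- Type-A confusability: `x = u w v`, `y = u w̄ v` for an alternating block `w`. -/
def TypeA (x y : List Bool) : Prop :=
  ∃ u v w : List Bool, IsAlt w ∧ x = u ++ w ++ v ∧ y = u ++ bcompl w ++ v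

/-- Type-B confusability: `{x, y} = {u a ā v b w, u ā v b b̄ w}`. -/
def TypeB (x y : List Bool) : Prop :=
  ∃ (u v w : List Bool) (a b : Bool),
    ({x, y} : Set (List Bool)) =
      {u ++ [a, !a] ++ v ++ [b] ++ w, u ++ [!a] ++ v ++ [b, !b] ++ w}

/-- `p` is a period of `s` : `s_i = s_{i+p}` whenever both indices are in range. -/
def IsPeriodOf (p : ℕ) (s : List Bool) : Prop :=
  ∀ i, i + p < s.length → s.getD i false = s.getD (i + p) false

/-- The (smallest) period of `s` is at most `ℓ`. -/
def PeriodLe (s : List Bool) (ℓ : ℕ) : Prop :=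
  ∃ p, 1 ≤ p ∧ p ≤ ℓ ∧ IsPeriodOf p s

/-- `R(n, ℓ, t)`: binary words of length `n` in which every contiguous subword
of period at most `ℓ` has length at most `t`. -/
def Rset (n ℓ t : ℕ) : Set (List Bool) :=
  {x | x.length = n ∧ ∀ s : List Bool, s <:+: x → PeriodLe s ℓ → s.length ≤ t}

/-- `Inv(x)`: the number of pairs `i < j` with `x_i > x_j` (i.e. `x_i = 1`, `x_j = 0`). -/
def invNum (x : List Bool) : ℕ :=
  ((Finset.range x.length ×ˢ Finset.range x.length).filter
    (fun q => q.1 < q.2 ∧ x.getD q.1 false = true ∧ x.getD q.2 false = false)).card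

/-!
Let `z` be the unique common supersequence of `x` and `y`. Both words arise from `z` by one
deletion, so `z = u d v e w` with `x = u v e w` and `y = u d v w` (or the other way round).
Deleting either of two equal adjacent letters gives the same word, so the window may be shrunk
until `v` neither starts with `d` nor ends with `e`. If `|v| ≥ 2` this is exactly Type B. If
`v` is empty, `u e d w` is a second common supersequence; if `v = c`, then `d = e = c̄` and
`u c c̄ c w` is one.
-/

theorem List.exists_eq_append_cons_of_sublist {α : Type*} {x z : List α} (h : x.Sublist z)
    (hl : z.length = x.length + 1) : ∃ p d q, z = p ++ d :: q ∧ x = p ++ q := by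
  induction h with
  | slnil => simp at hl
  | cons c h _ => exact ⟨[], c, _, rfl, h.eq_of_length (by simpa using hl.symm)⟩
  | cons_cons c _ ih =>
    obtain ⟨p, d, q, rfl, rfl⟩ := ih (by simpa using hl)
    exact ⟨c :: p, d, q, rfl, rfl⟩

theorem List.exists_reduced_deletion_pair {α : Type*} (u v w : List α) (d e : α) :
    ∃ u' v' w', u ++ d :: (v ++ e :: w) = u' ++ d :: (v' ++ e :: w') ∧
      u ++ v ++ e :: w = u' ++ v' ++ e :: w' ∧ u ++ d :: v ++ w = u' ++ d :: v' ++ w' ∧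
      v'.head? ≠ some d ∧ v'.getLast? ≠ some e := by
  by_cases hd : v.head? = some d
  · obtain ⟨v, rfl⟩ := head?_eq_some_iff.mp hd
    obtain ⟨u', v', w', h⟩ := exists_reduced_deletion_pair (u ++ [d]) v w d e
    exact ⟨u', v', w', by simpa using h⟩
  by_cases he : v.getLast? = some e
  · obtain ⟨v, rfl⟩ := getLast?_eq_some_iff.mp he
    obtain ⟨u', v', w', h⟩ := exists_reduced_deletion_pair u v (e :: w) d e
    exact ⟨u', v', w', by simpa using h⟩
  exact ⟨u, v, w, rfl, rfl, rfl, hd, he⟩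
termination_by v.length

theorem List.exists_deletion_pair {α : Type*} {x y z : List α} (hx : x.Sublist z)
    (hy : y.Sublist z) (hlx : z.length = x.length + 1) (hly : z.length = y.length + 1)
    (hne : x ≠ y) :
    ∃ u v w d e, z = u ++ d :: (v ++ e :: w) ∧ v.head? ≠ some d ∧ v.getLast? ≠ some e ∧
      (x = u ++ v ++ e :: w ∧ y = u ++ d :: v ++ w ∨
        y = u ++ v ++ e :: w ∧ x = u ++ d :: v ++ w) := by
  obtain ⟨p, d, q, rfl, rfl⟩ := exists_eq_append_cons_of_sublist hx hlx
  obtain ⟨p', d', q', hz, rfl⟩ := exists_eq_append_cons_of_sublist hy hly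
  suffices ∃ u v w a b, p ++ d :: q = u ++ a :: (v ++ b :: w) ∧
      (p ++ q = u ++ v ++ b :: w ∧ p' ++ q' = u ++ a :: v ++ w ∨
        p' ++ q' = u ++ v ++ b :: w ∧ p ++ q = u ++ a :: v ++ w) by
    obtain ⟨u, v, w, a, b, hz, hxy⟩ := this
    obtain ⟨u', v', w', hz', hx', hy', ha, hb⟩ := exists_reduced_deletion_pair u v w a b
    exact ⟨u', v', w', a, b, hz.trans hz', ha, hb, by rwa [← hx', ← hy']⟩
  rcases append_eq_append_iff.mp hz with
    ⟨_ | ⟨c, r⟩, rfl, hq⟩ | ⟨_ | ⟨c, r⟩, rfl, hq⟩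
  · simp_all
  · simp only [cons_append, cons.injEq] at hq
    obtain ⟨rfl, rfl⟩ := hq
    exact ⟨p, r, q', d, d', rfl, Or.inl ⟨by simp, by simp⟩⟩
  · simp_all
  · simp only [cons_append, cons.injEq] at hq
    obtain ⟨rfl, rfl⟩ := hq
    exact ⟨p', r, q, d', d, by simp [hz], Or.inr ⟨by simp, by simp⟩⟩

theorem TypeB.symm {x y : List Bool} (h : TypeB x y) : TypeB y x := by
  obtain ⟨u, v, w, a, b, hset⟩ := h
  exact ⟨u, v, w, a, b, by rw [← hset, Set.pair_comm]⟩

theorem typeB_of_insBall_inter_eq_singleton {u v w : List Bool} {d e : Bool}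
    (hne : u ++ v ++ e :: w ≠ u ++ d :: v ++ w) (hd : v.head? ≠ some d)
    (he : v.getLast? ≠ some e)
    (h : insBall 1 (u ++ v ++ e :: w) ∩ insBall 1 (u ++ d :: v ++ w) =
      {u ++ d :: (v ++ e :: w)}) :
    TypeB (u ++ v ++ e :: w) (u ++ d :: v ++ w) := by
  have hunique : ∀ z', z' ∈ insBall 1 (u ++ v ++ e :: w) →
      z' ∈ insBall 1 (u ++ d :: v ++ w) → z' = u ++ d :: (v ++ e :: w) :=
    fun z' hx hy => h.subset ⟨hx, hy⟩
  obtain _ | ⟨c, t⟩ := v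
  · have hde : d ≠ e := by rintro rfl; simp at hne
    have := hunique (u ++ e :: d :: w) ⟨by simp; omega, by simp⟩ ⟨by simp; omega, by simp⟩
    simp_all
  obtain rfl | ⟨m, b, rfl⟩ : t = [] ∨ ∃ m b, t = m ++ [b] := by
    simpa using t.eq_nil_or_concat
  · obtain ⟨rfl, rfl⟩ : d = !c ∧ e = !c := by
      simp only [head?_cons, getLast?_singleton, ne_eq, Option.some.injEq] at hd he
      cases c <;> cases d <;> cases e <;> simp_all
    have := hunique (u ++ c :: (!c) :: c :: w)
      ⟨by simp; omega, by simp⟩ ⟨by simp; omega, by simp⟩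
    simp at this
  · obtain rfl : c = !d := Bool.eq_not_iff.mpr (by simpa [eq_comm] using hd)
    obtain rfl : b = !e := Bool.eq_not_iff.mpr (by simpa [eq_comm, getLast?_cons] using he)
    refine ⟨u, m, w, d, !e, ?_⟩
    rw [Set.pair_comm]
    congr 1 <;> simp

theorem stmt0_general (x y : List Bool) (hne : x ≠ y)
    (h : (insBall 1 x ∩ insBall 1 y).ncard = 1) : TypeB x y := by
  obtain ⟨z, hz⟩ := Set.ncard_eq_one.mp h
  obtain ⟨⟨hzx, hxz⟩, hzy, hyz⟩ : z ∈ insBall 1 x ∩ insBall 1 y := hz ▸ rfl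
  obtain ⟨u, v, w, d, e, rfl, hd, he, ⟨rfl, rfl⟩ | ⟨rfl, rfl⟩⟩ :=
    exists_deletion_pair hxz hyz hzx hzy hne
  · exact typeB_of_insBall_inter_eq_singleton hne hd he hz
  · exact (typeB_of_insBall_inter_eq_singleton hne.symm hd he (Set.inter_comm _ _ ▸ hz)).symm

theorem stmt0 (n : ℕ) (hn : 1 ≤ n) (x y : List Bool)
    (hx : x.length = n) (hy : y.length = n) (hne : x ≠ y)
    (h : (insBall 1 x ∩ insBall 1 y).ncard = 1) : TypeB x y :=
  stmt0_general x y hne h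
end

section
/- Let x = u w v and y = u w̄ v be Type-A confusable binary sequences of length n, where w is the alternating block on which they differ. Then x and y are Type-B confusable if and only if w ∈ {(10)^m, (01)^m} for some m ≥ 2, or w ∈ {(10)^m 1, (01)^m 0} for some m ≥ 1. -/
open List

/-!
A Type-B pair differs in (at least) two positions at distance at least two, while a Type-A
pair differs only inside the block `w`; hence `|w| ≥ 3`, and the alternating words of length at
least three are exactly the four listed families. Conversely, for each such `w` the pair
`(u w v, u w̄ v)` is written explicitly in Type-B form, using the shift identity
`(a ā)^m a = a (ā a)^m`.
-/

lemma wpow_succ (p : List Bool) (m : ℕ) : wpow p (m + 1) = p ++ wpow p m := by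
  simp [wpow, List.replicate_succ]

lemma wpow_succ' (p : List Bool) (m : ℕ) : wpow p (m + 1) = wpow p m ++ p := by
  simp [wpow, List.replicate_succ']

lemma length_wpow (p : List Bool) (m : ℕ) : (wpow p m).length = m * p.length := by
  simp [wpow]

lemma wpow_append_eq_append_wpow (p q : List Bool) (m : ℕ) :
    wpow (p ++ q) m ++ p = p ++ wpow (q ++ p) m := by
  induction m with
  | zero => simp [wpow]
  | succ m ih => rw [wpow_succ, wpow_succ, append_assoc, ih]; simp

lemma bcompl_append (s t : List Bool) : bcompl (s ++ t) = bcompl s ++ bcompl t :=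
  map_append

lemma bcompl_wpow (p : List Bool) (m : ℕ) : bcompl (wpow p m) = wpow (bcompl p) m := by
  simp [bcompl, wpow, map_flatten]

lemma getElem?_append_middle_congr {α : Type*} {u w₁ w₂ v : List α} (h : w₁.length = w₂.length)
    {i : ℕ} (hi : i < u.length ∨ u.length + w₁.length ≤ i) :
    (u ++ w₁ ++ v)[i]? = (u ++ w₂ ++ v)[i]? := by
  simp only [append_assoc]
  rcases hi with hi | hi
  · rw [getElem?_append_left hi, getElem?_append_left hi]
  · rw [getElem?_append_right (by omega), getElem?_append_right (by omega),
      getElem?_append_right (by omega), getElem?_append_right (by omega), h]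

theorem TypeB.exists_distant_mismatches {x y : List Bool} (h : TypeB x y) :
    ∃ p q, p + 2 ≤ q ∧ x[p]? ≠ y[p]? ∧ x[q]? ≠ y[q]? := by
  obtain ⟨u, v, w, a, b, hxy⟩ := h
  set X := u ++ [a, !a] ++ v ++ [b] ++ w
  set Y := u ++ [!a] ++ v ++ [b, !b] ++ w
  have hp : X[u.length]? ≠ Y[u.length]? := by simp [X, Y]
  have hq : X[u.length + 2 + v.length]? ≠ Y[u.length + 2 + v.length]? := by
    simp [X, Y, getElem?_append_right, Nat.add_assoc, getElem?_cons]
  rcases Set.pair_eq_pair_iff.mp hxy with ⟨rfl, rfl⟩ | ⟨rfl, rfl⟩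
  · exact ⟨_, _, by omega, hp, hq⟩
  · exact ⟨_, _, by omega, hp.symm, hq.symm⟩

theorem three_le_length_of_typeB {u w v : List Bool}
    (h : TypeB (u ++ w ++ v) (u ++ bcompl w ++ v)) : 3 ≤ w.length := by
  obtain ⟨p, q, hpq, hp, hq⟩ := h.exists_distant_mismatches
  have inside : ∀ {i}, (u ++ w ++ v)[i]? ≠ (u ++ bcompl w ++ v)[i]? →
      u.length ≤ i ∧ i < u.length + w.length := fun hi => by
    by_contra hout
    exact hi (getElem?_append_middle_congr (by simp [bcompl]) (by omega))
  have := inside hp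
  have := inside hq
  omega

theorem IsAlt.eq_wpow_of_three_le_length {w : List Bool} (hw : IsAlt w) (h : 3 ≤ w.length) :
    (∃ m, 2 ≤ m ∧ (w = wpow [true, false] m ∨ w = wpow [false, true] m)) ∨
      (∃ m, 1 ≤ m ∧ (w = wpow [true, false] m ++ [true] ∨
        w = wpow [false, true] m ++ [false])) := by
  obtain ⟨a, ⟨m, -, rfl⟩ | ⟨m, rfl⟩⟩ := hw
  · simp only [length_wpow] at h
    exact .inl ⟨m, by simp at h; omega, by cases a <;> simp⟩
  · simp only [length_append, length_wpow] at h
    exact .inr ⟨m, by simp at h; omega, by cases a <;> simp⟩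

lemma bcompl_wpow_alt (a : Bool) (m : ℕ) : bcompl (wpow [a, !a] m) = wpow [!a, a] m := by
  rw [bcompl_wpow]; simp [bcompl]

lemma wpow_alt_append (a : Bool) (m : ℕ) : wpow [a, !a] m ++ [a] = a :: wpow [!a, a] m :=
  wpow_append_eq_append_wpow [a] [!a] m

theorem typeB_wpow (u v : List Bool) (a : Bool) {m : ℕ} (hm : 2 ≤ m) :
    TypeB (u ++ wpow [a, !a] m ++ v) (u ++ bcompl (wpow [a, !a] m) ++ v) := by
  obtain ⟨k, rfl⟩ := Nat.exists_eq_add_of_le' hm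
  have hx : wpow [a, !a] (k + 2) = [a, !a] ++ (wpow [a, !a] k ++ [a]) ++ [!a] := by
    rw [wpow_succ, wpow_succ']; simp
  have hy : bcompl (wpow [a, !a] (k + 2)) = [!a] ++ (wpow [a, !a] k ++ [a]) ++ [!a, a] := by
    rw [bcompl_wpow_alt, wpow_alt_append, wpow_succ, wpow_succ']; simp
  refine ⟨u, wpow [a, !a] k ++ [a], v, a, !a, ?_⟩
  rw [hy, hx, Bool.not_not]
  simp only [append_assoc]

theorem typeB_wpow_append (u v : List Bool) (a : Bool) {m : ℕ} (hm : 1 ≤ m) :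
    TypeB (u ++ (wpow [a, !a] m ++ [a]) ++ v) (u ++ bcompl (wpow [a, !a] m ++ [a]) ++ v) := by
  obtain ⟨k, rfl⟩ := Nat.exists_eq_add_of_le' hm
  have hx : wpow [a, !a] (k + 1) ++ [a] = [a, !a] ++ wpow [a, !a] k ++ [a] := by
    rw [wpow_succ]
  have hy : bcompl (wpow [a, !a] (k + 1) ++ [a]) = [!a] ++ wpow [a, !a] k ++ [a, !a] := by
    have := wpow_alt_append (!a) (k + 1)
    rw [Bool.not_not] at this
    rw [bcompl_append, bcompl_wpow_alt, show bcompl [a] = [!a] from rfl, this, wpow_succ']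
    simp
  refine ⟨u, wpow [a, !a] k, v, a, a, ?_⟩
  rw [hy, hx]
  simp only [append_assoc]

theorem stmt1 (u v w x y : List Bool) (hw : IsAlt w)
    (hx : x = u ++ w ++ v) (hy : y = u ++ bcompl w ++ v) :
    TypeB x y ↔
      ((∃ m, 2 ≤ m ∧ (w = wpow [true, false] m ∨ w = wpow [false, true] m)) ∨
       (∃ m, 1 ≤ m ∧ (w = wpow [true, false] m ++ [true] ∨
                      w = wpow [false, true] m ++ [false]))) := by
  subst hx hy
  refine ⟨fun h => hw.eq_wpow_of_three_le_length (three_le_length_of_typeB h), ?_⟩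
  rintro (⟨m, hm, rfl | rfl⟩ | ⟨m, hm, rfl | rfl⟩)
  · exact typeB_wpow u v true hm
  · exact typeB_wpow u v false hm
  · exact typeB_wpow_append u v true hm
  · exact typeB_wpow_append u v false hm
end

section
/- Let x = u a ā v b w and y = u ā v b b̄ w (with u, v, w ∈ {0,1}*, a, b ∈ {0,1}) be Type-B confusable binary sequences of length n. Then x and y are Type-A confusable if and only if one of the following holds: (i) a = b and v = (a ā)^m for some m ≥ 0; (ii) a = b̄ and v = (a ā)^m a for some m ≥ 0. -/
open List

def altWord : Bool → ℕ → List Bool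
  | _, 0 => []
  | a, n + 1 => a :: altWord (!a) n

@[simp] lemma length_altWord (a : Bool) (n : ℕ) : (altWord a n).length = n := by
  induction n generalizing a <;> simp [altWord, *]

lemma altWord_add_two (a : Bool) (n : ℕ) : altWord a (n + 2) = a :: (!a) :: altWord a n := by
  simp [altWord]

lemma altWord_two_mul (a : Bool) (m : ℕ) : altWord a (2 * m) = wpow [a, !a] m := by
  induction m with
  | zero => rfl
  | succ m ih => rw [Nat.mul_succ, altWord_add_two, ih, wpow_succ]; rfl

lemma altWord_two_mul_add_one (a : Bool) (m : ℕ) :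
    altWord a (2 * m + 1) = wpow [a, !a] m ++ [a] := by
  induction m with
  | zero => rfl
  | succ m ih =>
    rw [show 2 * (m + 1) + 1 = 2 * m + 1 + 2 by ring, altWord_add_two, ih, wpow_succ]
    rfl

lemma altWord_two_mul_add_two (a : Bool) (m : ℕ) :
    altWord a (2 * m + 2) = wpow [a, !a] m ++ [a, !a] := by
  rw [← wpow_succ', ← altWord_two_mul, Nat.mul_succ]

lemma altWord_two_mul_add_three (a : Bool) (m : ℕ) :
    altWord a (2 * m + 3) = wpow [a, !a] m ++ [a] ++ [!a, a] := by
  rw [show 2 * m + 3 = 2 * (m + 1) + 1 by ring, altWord_two_mul_add_one, wpow_succ']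
  simp

lemma isAlt_altWord (a : Bool) {n : ℕ} (hn : n ≠ 0) : IsAlt (altWord a n) := by
  obtain ⟨m, rfl | rfl⟩ := Nat.even_or_odd' n
  · exact ⟨a, .inl ⟨m, by omega, altWord_two_mul a m⟩⟩
  · exact ⟨a, .inr ⟨m, altWord_two_mul_add_one a m⟩⟩

lemma append_pair_eq_altWord_iff (a b : Bool) (v : List Bool) :
    v ++ [b, !b] = altWord a (v.length + 2) ↔
      (a = b ∧ ∃ m, v = wpow [a, !a] m) ∨ (a = !b ∧ ∃ m, v = wpow [a, !a] m ++ [a]) := by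
  constructor
  · intro h
    obtain ⟨m, hm | hm⟩ := Nat.even_or_odd' v.length
    · rw [hm, altWord_two_mul_add_two] at h
      obtain ⟨rfl, hb⟩ := append_inj' h rfl
      simp only [cons.injEq] at hb
      exact .inl ⟨hb.1.symm, m, rfl⟩
    · rw [hm, altWord_two_mul_add_three] at h
      obtain ⟨rfl, hb⟩ := append_inj' h rfl
      simp only [cons.injEq] at hb
      exact .inr ⟨by simp [hb.1], m, rfl⟩
  · rintro (⟨rfl, m, rfl⟩ | ⟨hab, m, rfl⟩)
    · rw [← altWord_two_mul, length_altWord, altWord_two_mul_add_two, altWord_two_mul]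
    · obtain rfl : b = !a := by simp [hab]
      rw [← altWord_two_mul_add_one, length_altWord, altWord_two_mul_add_three,
        altWord_two_mul_add_one, Bool.not_not]

lemma take_altWord (a : Bool) {k n : ℕ} (h : k ≤ n) : (altWord a n).take k = altWord a k := by
  induction n generalizing a k with
  | zero => rw [Nat.le_zero.mp h]; rfl
  | succ n ih =>
    cases k with
    | zero => rfl
    | succ k => simp [altWord, ih (!a) (Nat.le_of_succ_le_succ h)]

lemma bcompl_cons_eq_iff (c d : Bool) (l : List Bool) :
    bcompl (c :: l) = l ++ [d] ↔ c :: l ++ [d] = altWord c (l.length + 2) := by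
  induction l generalizing c with
  | nil => simp [bcompl, altWord, eq_comm]
  | cons e l ih =>
    have := ih e
    simp only [bcompl, altWord, map_cons, cons_append, length_cons, cons.injEq, true_and,
      Bool.not_not] at this ⊢
    rw [this]
    constructor <;> rintro ⟨rfl, h⟩ <;> simpa using h

lemma isAlt_of_bcompl_cons_eq {c d : Bool} {l : List Bool} (h : bcompl (c :: l) = l ++ [d]) :
    IsAlt (c :: l) := by
  have h' := congrArg (take (l.length + 1)) ((bcompl_cons_eq_iff c d l).mp h)
  rw [take_altWord c (by omega)] at h'
  simp only [cons_append, take_succ_cons, take_left'] at h'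
  rw [h']
  exact isAlt_altWord c l.length.succ_ne_zero

section Block
variable {α : Type*} {U V W W' u w s s' : List α}

lemma length_le_of_head?_ne {X X' : List α} (hlen : s.length = s'.length)
    (hne : s.head? ≠ s'.head?) (hx : U ++ X = u ++ s ++ w) (hy : U ++ X' = u ++ s' ++ w) :
    U.length ≤ u.length := by
  by_contra! h
  rcases s with _ | ⟨c, s⟩ <;> rcases s' with _ | ⟨d, s'⟩ <;> simp at hlen hne
  have hx' : (U ++ X)[u.length]? = some c := by simp [hx]
  have hy' : (U ++ X')[u.length]? = some d := by simp [hy]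
  rw [getElem?_append_left h] at hx' hy'
  exact hne (Option.some.inj (hx'.symm.trans hy'))

lemma length_le_of_getLast?_ne {X X' : List α} (hlen : s.length = s'.length)
    (hne : s.getLast? ≠ s'.getLast?) (hx : X ++ V = u ++ s ++ w) (hy : X' ++ V = u ++ s' ++ w) :
    V.length ≤ w.length := by
  have := length_le_of_head?_ne (X := X.reverse) (X' := X'.reverse) (u := w.reverse)
    (s := s.reverse) (s' := s'.reverse) (w := u.reverse) (by simpa) (by simpa)
    (by simpa using congrArg reverse hx) (by simpa using congrArg reverse hy)
  simpa using this

lemma exists_eq_append_append_of_ne (hlen : s.length = s'.length)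
    (hhead : s.head? ≠ s'.head?) (hlast : s.getLast? ≠ s'.getLast?)
    (hx : U ++ W ++ V = u ++ s ++ w) (hy : U ++ W' ++ V = u ++ s' ++ w) :
    ∃ p q, W = p ++ s ++ q ∧ W' = p ++ s' ++ q := by
  rw [append_assoc] at hx hy
  have hU := length_le_of_head?_ne hlen hhead hx hy
  rw [← append_assoc] at hx hy
  have hV := length_le_of_getLast?_ne hlen hlast hx hy
  obtain ⟨p, rfl⟩ : U <+: u := prefix_of_prefix_length_le (l₃ := u ++ s ++ w)
    ⟨W ++ V, by simp [← hx]⟩ ⟨s ++ w, by simp⟩ hU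
  obtain ⟨q, rfl⟩ : V <:+ w := suffix_of_suffix_length_le (l₃ := U ++ p ++ s ++ w)
    ⟨U ++ W, hx⟩ ⟨U ++ p ++ s, by simp⟩ hV
  refine ⟨p, q, ?_, ?_⟩
  · exact append_cancel_right (by simpa using hx)
  · exact append_cancel_right (by simpa using hy)

lemma map_eq_of_append_map_append_eq (f : α → α) (hlen : s.length = s'.length)
    (hhead : s.head? ≠ s'.head?) (hlast : s.getLast? ≠ s'.getLast?)
    (hx : U ++ W ++ V = u ++ s ++ w) (hy : U ++ W.map f ++ V = u ++ s' ++ w) :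
    s.map f = s' := by
  obtain ⟨p, q, rfl, h⟩ := exists_eq_append_append_of_ne hlen hhead hlast hx hy
  simp only [map_append] at h
  exact (append_inj (append_inj' h (length_map _)).1 (length_map _)).2

end Block

theorem stmt2 (u v w : List Bool) (a b : Bool) (x y : List Bool)
    (hx : x = u ++ [a, !a] ++ v ++ [b] ++ w)
    (hy : y = u ++ [!a] ++ v ++ [b, !b] ++ w) :
    TypeA x y ↔
      ((a = b ∧ ∃ m, v = wpow [a, !a] m) ∨
       (a = !b ∧ ∃ m, v = wpow [a, !a] m ++ [a])) := by
  subst hx hy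
  have hshift : bcompl (a :: ((!a) :: v ++ [b])) = (!a) :: v ++ [b] ++ [!b] ↔
      v ++ [b, !b] = altWord a (v.length + 2) := by
    rw [bcompl_cons_eq_iff]
    simp [altWord_add_two]
  rw [← append_pair_eq_altWord_iff, ← hshift]
  constructor
  · rintro ⟨U, V, W, -, hx, hy⟩
    exact map_eq_of_append_map_append_eq (u := u) (w := w) _ (by simp) (by simp)
      (by simp [getLast?_cons]) (by rw [← hx]; simp) (by rw [← bcompl, ← hy]; simp)
  · intro h
    exact ⟨u, w, _, isAlt_of_bcompl_cons_eq h, by simp, by rw [h]; simp⟩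
end

section
/- Let n ≥ 3 and let x, y ∈ {0,1}^n. If |I_1(x) ∩ I_1(y)| = 1, then n + 3 ≤ |I_2(x) ∩ I_2(y)| ≤ n + 5. -/
open List

/-! Let `z` be the unique common supersequence of `x` and `y` of length `n + 1`. Its ball
`I_1(z)` consists of `n + 3` common supersequences of length `n + 2`, which gives the lower
bound. Every other common supersequence of length `n + 2` contains no common supersequence
of length `n + 1`, and there are at most two such words. Indeed, after stripping the common
prefix, `x = a x'` and `y = b y'` with `a ≠ b` and, up to symmetry, `x' ⊑ b y'`. Such a word
cannot begin with `a` (it would contain `a b y'`), so it is `b w` where `w` is a common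
supersequence of `a x'` and `y'` avoiding `b y'`, and the same first-letter recursion shows
that at most two words `w` qualify. -/

theorem List.Sublist.eq_of_cons_of_ne {α : Type*} {a b : α} {l₁ l₂ : List α}
    (h : a :: l₁ <+ b :: l₂) (hab : a ≠ b) (hlen : l₂.length ≤ l₁.length + 1) :
    l₂ = a :: l₁ :=
  ((h.of_cons_of_ne hab).eq_of_length_le (by simpa using hlen)).symm

section CommonSupersequences

variable {α : Type*}

def commonSupersequences (k : ℕ) (x y : List α) : Set (List α) :=
  {w | w.length = k ∧ x <+ w ∧ y <+ w}

theorem commonSupersequences_comm (k : ℕ) (x y : List α) :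
    commonSupersequences k x y = commonSupersequences k y x := by
  ext w
  simp only [commonSupersequences, Set.mem_ofPred_eq, and_comm (a := x <+ w)]

theorem commonSupersequences_cons_subset {c : α} {u v : List α} (hvu : ¬ v <+ u) :
    commonSupersequences ((c :: u).length + 1) (c :: u) (c :: v) ⊆
      (c :: ·) '' commonSupersequences (u.length + 1) u v := by
  rintro (_ | ⟨e, w⟩) ⟨hl, hu, hv⟩
  · simp at hl
  simp only [length_cons, add_left_inj] at hl
  by_cases hec : e = c
  · subst hec
    exact ⟨w, ⟨hl, cons_sublist_cons.1 hu, cons_sublist_cons.1 hv⟩, rfl⟩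
  · have hw : w = c :: u := hu.eq_of_cons_of_ne (Ne.symm hec) (by simp [hl])
    exact absurd (cons_sublist_cons.1 (hw ▸ hv.of_cons_of_ne (Ne.symm hec))) hvu

theorem encard_commonSupersequences_le_two {x y : List α} (hlen : x.length = y.length)
    (hne : x ≠ y) : (commonSupersequences (x.length + 1) x y).encard ≤ 2 := by
  induction x generalizing y with
  | nil => cases y <;> simp_all
  | cons c x ih =>
    cases y with
    | nil => simp at hlen
    | cons d y =>
    simp only [length_cons, add_left_inj] at hlen
    by_cases hcd : c = d
    · subst hcd
      have hne' : x ≠ y := fun h => hne (h ▸ rfl)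
      calc _ ≤ _ := Set.encard_le_encard
            (commonSupersequences_cons_subset fun h => hne' (h.eq_of_length hlen.symm).symm)
        _ ≤ _ := Set.encard_image_le _ _
        _ ≤ 2 := ih hlen hne'
    · calc _ ≤ ({c :: d :: y, d :: c :: x} : Set (List α)).encard := Set.encard_le_encard ?_
        _ ≤ 2 := (Set.encard_insert_le _ _).trans (by simp [one_add_one_eq_two])
      rintro (_ | ⟨e, w⟩) ⟨hl, hx, hy⟩
      · simp at hl
      simp only [length_cons, add_left_inj] at hl
      by_cases hec : e = c
      · subst hec
        exact Or.inl (by rw [hy.eq_of_cons_of_ne (Ne.symm hcd) (by omega)])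
      have hw : w = c :: x := hx.eq_of_cons_of_ne (Ne.symm hec) (by omega)
      by_cases hed : e = d
      · exact Or.inr (by rw [hed, hw]; rfl)
      · exact absurd (cons_eq_cons.1
          (hw.symm.trans (hy.eq_of_cons_of_ne (Ne.symm hed) (by omega)))).1 hcd

theorem encard_commonSupersequences_le_three {p q : List α} (hlen : p.length = q.length + 1)
    (hqp : ¬ q <+ p) : (commonSupersequences (p.length + 1) p q).encard ≤ 3 := by
  induction p generalizing q with
  | nil => simp at hlen
  | cons e p ih =>
    cases q with
    | nil => exact absurd (nil_sublist _) hqp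
    | cons g q =>
    simp only [length_cons, add_left_inj] at hlen
    by_cases hge : g = e
    · subst hge
      have hqp' : ¬ q <+ p := fun h => hqp (h.cons_cons g)
      calc _ ≤ _ := Set.encard_le_encard (commonSupersequences_cons_subset hqp')
        _ ≤ _ := Set.encard_image_le _ _
        _ ≤ 3 := ih hlen hqp'
    have hne : p ≠ g :: q := fun h => hqp (h ▸ sublist_cons_self e p)
    calc _ ≤ (insert (g :: e :: p)
          ((e :: ·) '' commonSupersequences (p.length + 1) p (g :: q))).encard :=
          Set.encard_le_encard ?_
      _ ≤ 2 + 1 := by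
          grw [Set.encard_insert_le, Set.encard_image_le,
            encard_commonSupersequences_le_two (by simpa using hlen) hne]
      _ = 3 := by norm_num
    rintro (_ | ⟨f, w⟩) ⟨hl, hp, hq⟩
    · simp at hl
    simp only [length_cons, add_left_inj] at hl
    by_cases hfe : f = e
    · subst hfe
      exact Or.inr ⟨w, ⟨hl, cons_sublist_cons.1 hp, hq.of_cons_of_ne hge⟩, rfl⟩
    have hw : w = e :: p := hp.eq_of_cons_of_ne (Ne.symm hfe) (by omega)
    by_cases hfg : f = g
    · exact Or.inl (by rw [hfg, hw])
    · exact absurd (hw ▸ hq.of_cons_of_ne (Ne.symm hfg)) hqp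

theorem encard_commonSupersequences_not_cons_sublist_le_two {u v : List α} {a : α}
    (hlen : u.length = v.length + 1) (hvu : ¬ v <+ u) (hu : u.tail <+ a :: v) :
    {w ∈ commonSupersequences (u.length + 1) u v | ¬ a :: v <+ w}.encard ≤ 2 := by
  induction u generalizing v with
  | nil => simp at hlen
  | cons c u ih =>
    cases v with
    | nil => exact absurd (nil_sublist _) hvu
    | cons d v =>
    simp only [length_cons, add_left_inj, tail_cons] at hlen hu
    by_cases hdc : d = c
    · subst hdc
      have hvu' : ¬ v <+ u := fun h => hvu (h.cons_cons d)
      have hsub := commonSupersequences_cons_subset (c := d) hvu'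
      by_cases had : a = d
      · subst had
        calc _ ≤ ((a :: ·) ''
              {w ∈ commonSupersequences (u.length + 1) u v | ¬ a :: v <+ w}).encard := by
              refine Set.encard_le_encard ?_
              rintro _ ⟨hw, hnot⟩
              obtain ⟨w, hw', rfl⟩ := hsub hw
              exact ⟨w, ⟨hw', fun h => hnot (h.cons_cons a)⟩, rfl⟩
          _ ≤ _ := Set.encard_image_le _ _
          _ ≤ 2 := ih hlen hvu' hu.tail
      · set m := a :: d :: v
        have hm : m ∈ commonSupersequences (u.length + 1) u v :=
          ⟨by simp [m, hlen], hu, (sublist_cons_self _ _).trans (sublist_cons_self _ _)⟩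
        calc _ ≤ ((d :: ·) '' (commonSupersequences (u.length + 1) u v \ {m})).encard := by
              refine Set.encard_le_encard ?_
              rintro _ ⟨hw, hnot⟩
              obtain ⟨w, hw', rfl⟩ := hsub hw
              exact ⟨w, ⟨hw', fun h => hnot (h ▸ sublist_cons_self d m)⟩, rfl⟩
          _ ≤ _ := Set.encard_image_le _ _
          _ = _ := Set.encard_sdiff_singleton_of_mem hm
          _ ≤ 2 := tsub_le_iff_right.2 ((encard_commonSupersequences_le_three hlen hvu').trans_eq
              (by norm_num))
    · set m := a :: d :: v
      have hne : d :: v ≠ u := fun h => hvu (h ▸ sublist_cons_self c u)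
      have hm : m ∈ commonSupersequences ((d :: v).length + 1) (d :: v) u :=
        ⟨rfl, sublist_cons_self _ _, hu⟩
      calc _ ≤ (insert (d :: c :: u) ((c :: ·) ''
            (commonSupersequences ((d :: v).length + 1) (d :: v) u \ {m}))).encard :=
            Set.encard_le_encard ?_
        _ ≤ (commonSupersequences ((d :: v).length + 1) (d :: v) u).encard - 1 + 1 := by
            grw [Set.encard_insert_le, Set.encard_image_le, Set.encard_sdiff_singleton_of_mem hm]
        _ ≤ 2 - 1 + 1 := by
            grw [encard_commonSupersequences_le_two (by simpa using hlen.symm) hne]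
        _ = 2 := rfl
      rintro (_ | ⟨e, w⟩) ⟨⟨hl, hu', hv'⟩, hnot⟩
      · simp at hl
      simp only [length_cons, add_left_inj] at hl
      by_cases hec : e = c
      · subst hec
        refine Or.inr ⟨w, ⟨⟨by simp [hl, hlen], hv'.of_cons_of_ne hdc,
          cons_sublist_cons.1 hu'⟩, fun h => hnot (h ▸ sublist_cons_self e m)⟩, rfl⟩
      have hw : w = c :: u := hu'.eq_of_cons_of_ne (Ne.symm hec) (by omega)
      by_cases hed : e = d
      · exact Or.inl (by rw [hed, hw])
      · exact absurd (hw ▸ hv'.of_cons_of_ne (Ne.symm hed)) hvu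

def minimalCommonSupersequences (k : ℕ) (x y : List α) : Set (List α) :=
  {z ∈ commonSupersequences (k + 1) x y | ∀ w ∈ commonSupersequences k x y, ¬ w <+ z}

theorem minimalCommonSupersequences_comm (k : ℕ) (x y : List α) :
    minimalCommonSupersequences k x y = minimalCommonSupersequences k y x := by
  simp only [minimalCommonSupersequences, commonSupersequences_comm k x y,
    commonSupersequences_comm (k + 1) x y]

end CommonSupersequences

theorem encard_minimalCommonSupersequences_cons_le_two {a b : Bool} {x y : List Bool}
    (hab : a ≠ b) (hlen : x.length = y.length) (hx : x <+ b :: y) :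
    (minimalCommonSupersequences (x.length + 2) (a :: x) (b :: y)).encard ≤ 2 := by
  have hM : minimalCommonSupersequences (x.length + 2) (a :: x) (b :: y) ⊆ (b :: ·) ''
      {w ∈ commonSupersequences ((a :: x).length + 1) (a :: x) y | ¬ b :: y <+ w} := by
    rintro (_ | ⟨e, z⟩) ⟨⟨hl, hxz, hyz⟩, hmin⟩
    · simp at hl
    simp only [length_cons, add_left_inj] at hl
    by_cases heb : e = b
    · subst heb
      exact ⟨z, ⟨⟨by simp [hl], hxz.of_cons_of_ne hab, cons_sublist_cons.1 hyz⟩,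
        fun h => hmin z ⟨hl, hxz.of_cons_of_ne hab, h⟩ (sublist_cons_self e z)⟩, rfl⟩
    · -- a binary alphabet forces `e = a`, and then `a :: b :: y` lies below `e :: z`
      obtain rfl : e = a := by cases e <;> cases a <;> cases b <;> simp_all
      exact absurd ((hyz.of_cons_of_ne (Ne.symm heb)).cons_cons e)
        (hmin _ ⟨by simp [hlen], hx.cons_cons e, sublist_cons_self e _⟩)
  by_cases hy : y <+ a :: x
  · suffices minimalCommonSupersequences (x.length + 2) (a :: x) (b :: y) = ∅ by simp [this]
    refine Set.eq_empty_of_forall_notMem fun z hz => ?_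
    obtain ⟨z, ⟨⟨-, hxz, -⟩, -⟩, rfl⟩ := hM hz
    exact hz.2 _ ⟨by simp, sublist_cons_self b _, hy.cons_cons b⟩ (hxz.cons_cons b)
  · calc _ ≤ _ := Set.encard_le_encard hM
      _ ≤ _ := Set.encard_image_le _ _
      _ ≤ 2 := encard_commonSupersequences_not_cons_sublist_le_two (by simp [hlen]) hy hx

theorem encard_minimalCommonSupersequences_le_two {x y : List Bool}
    (hlen : x.length = y.length) (hne : x ≠ y)
    (hS : (commonSupersequences (x.length + 1) x y).Nonempty) :
    (minimalCommonSupersequences (x.length + 1) x y).encard ≤ 2 := by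
  induction x generalizing y with
  | nil => cases y <;> simp_all
  | cons c x ih =>
    cases y with
    | nil => simp at hlen
    | cons d y =>
    simp only [length_cons, add_left_inj] at hlen
    obtain ⟨_ | ⟨e, t⟩, hz⟩ := hS
    · simp [commonSupersequences] at hz
    by_cases hcd : c = d
    · subst hcd
      have hne' : x ≠ y := fun h => hne (h ▸ rfl)
      have hsub := commonSupersequences_cons_subset (c := c)
        fun h => hne' (h.eq_of_length hlen.symm).symm
      calc _ ≤ ((c :: ·) '' minimalCommonSupersequences (x.length + 1) x y).encard := by
            refine Set.encard_le_encard ?_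
            rintro (_ | ⟨g, z⟩) ⟨⟨hl, hxz, hyz⟩, hmin⟩
            · simp at hl
            simp only [length_cons, add_left_inj] at hl
            by_cases hgc : g = c
            · subst hgc
              exact ⟨z, ⟨⟨hl, cons_sublist_cons.1 hxz, cons_sublist_cons.1 hyz⟩,
                fun w hw hwz => hmin (g :: w) ⟨by simp [hw.1], hw.2.1.cons_cons g,
                  hw.2.2.cons_cons g⟩ (hwz.cons_cons g)⟩, rfl⟩
            · exact absurd (sublist_cons_self g z) (hmin z ⟨hl, hxz.of_cons_of_ne (Ne.symm hgc),
                hyz.of_cons_of_ne (Ne.symm hgc)⟩)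
        _ ≤ _ := Set.encard_image_le _ _
        _ ≤ 2 := ih hlen hne' ((hsub hz).imp fun _ ⟨ht, _⟩ => ht)
    obtain ⟨hl, hxt, hyt⟩ := hz
    simp only [length_cons, add_left_inj] at hl
    by_cases hec : e = c
    · subst hec
      have ht : t = d :: y := hyt.eq_of_cons_of_ne (Ne.symm hcd) (by omega)
      exact encard_minimalCommonSupersequences_cons_le_two hcd hlen
        (ht ▸ cons_sublist_cons.1 hxt)
    have ht : t = c :: x := hxt.eq_of_cons_of_ne (Ne.symm hec) (by omega)
    by_cases hed : e = d
    · subst hed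
      rw [minimalCommonSupersequences_comm, show (c :: x).length + 1 = y.length + 2 by simp [hlen]]
      exact encard_minimalCommonSupersequences_cons_le_two (Ne.symm hcd) hlen.symm
        (ht ▸ cons_sublist_cons.1 hyt)
    · exact absurd (cons_eq_cons.1
        (ht.symm.trans (hyt.eq_of_cons_of_ne (Ne.symm hed) (by omega)))).1 hcd

theorem encard_insBall_one (u : List Bool) : (insBall 1 u).encard = u.length + 2 := by
  induction u with
  | nil =>
    have : insBall 1 [] = {[false], [true]} := by
      ext (_ | ⟨_ | _, _ | _⟩) <;> simp [insBall]
    rw [this, Set.encard_pair (by simp)]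
    rfl
  | cons c u ih =>
    have hball : insBall 1 (c :: u) = insert ((!c) :: c :: u) ((c :: ·) '' insBall 1 u) := by
      ext (_ | ⟨e, w⟩)
      · simp [insBall]
      constructor
      · rintro ⟨hl, hu⟩
        simp only [length_cons, add_left_inj] at hl
        by_cases hec : e = c
        · exact Or.inr ⟨w, ⟨hl, cons_sublist_cons.1 (hec ▸ hu)⟩, hec ▸ rfl⟩
        · rw [hu.eq_of_cons_of_ne (Ne.symm hec) hl.le, Bool.eq_not_of_ne hec]
          exact Or.inl rfl
      · rintro (h | ⟨w, ⟨hl, hu⟩, h⟩)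
        · rw [h]
          exact ⟨rfl, sublist_cons_self _ _⟩
        · rw [← h]
          exact ⟨by simp [hl], hu.cons_cons c⟩
    rw [hball, Set.encard_insert_of_notMem, cons_injective.encard_image, ih]
    · simp only [length_cons]
      push_cast
      ring
    · rintro ⟨w, -, h⟩
      simpa using (cons_eq_cons.1 h).1

theorem insBall_inter_insBall {x y : List Bool} (hlen : x.length = y.length) (t : ℕ) :
    insBall t x ∩ insBall t y = commonSupersequences (x.length + t) x y := by
  ext w
  simp only [insBall, commonSupersequences, Set.mem_inter_iff, Set.mem_ofPred_eq, hlen]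
  tauto

theorem insBall_one_subset_commonSupersequences {x y z : List Bool} {k : ℕ}
    (hz : z ∈ commonSupersequences k x y) : insBall 1 z ⊆ commonSupersequences (k + 1) x y :=
  fun _ ⟨hl, hzw⟩ => ⟨by rw [hl, hz.1], hz.2.1.trans hzw, hz.2.2.trans hzw⟩

theorem commonSupersequences_subset_insBall_one_union {x y z : List Bool} {k : ℕ}
    (hz : commonSupersequences k x y = {z}) :
    commonSupersequences (k + 1) x y ⊆ insBall 1 z ∪ minimalCommonSupersequences k x y := by
  have hzS : z ∈ commonSupersequences k x y := hz ▸ rfl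
  intro w hw
  by_cases hzw : z <+ w
  · exact Or.inl ⟨by rw [hw.1, hzS.1], hzw⟩
  · refine Or.inr ⟨hw, fun v hv hvw => hzw ?_⟩
    rw [hz, Set.mem_singleton_iff] at hv
    exact hv ▸ hvw

theorem stmt4_general (n : ℕ) (x y : List Bool)
    (hx : x.length = n) (hy : y.length = n)
    (h : (insBall 1 x ∩ insBall 1 y).ncard = 1) :
    n + 3 ≤ (insBall 2 x ∩ insBall 2 y).ncard ∧
    (insBall 2 x ∩ insBall 2 y).ncard ≤ n + 5 := by
  have hxy : x ≠ y := by
    rintro rfl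
    rw [Set.inter_self, Set.ncard_def, encard_insBall_one] at h
    exact absurd (ENat.toNat_natCast (x.length + 2) ▸ h) (by omega)
  have hlen : x.length = y.length := hx.trans hy.symm
  rw [insBall_inter_insBall hlen, hx] at h ⊢
  obtain ⟨z, hz⟩ := Set.ncard_eq_one.1 h
  have hzS : z ∈ commonSupersequences (n + 1) x y := hz ▸ rfl
  have hzball : (insBall 1 z).encard = n + 3 := by
    rw [encard_insBall_one, hzS.1]
    push_cast
    ring
  have hM := encard_minimalCommonSupersequences_le_two hlen hxy ⟨z, hx ▸ hzS⟩
  rw [hx] at hM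
  have hcard : ((n + 3 : ℕ) : ℕ∞) ≤ (commonSupersequences (n + 2) x y).encard ∧
      (commonSupersequences (n + 2) x y).encard ≤ (n + 5 : ℕ) := by
    refine ⟨?_, ?_⟩
    · calc ((n + 3 : ℕ) : ℕ∞) = (insBall 1 z).encard := by rw [hzball]; push_cast; rfl
        _ ≤ _ := Set.encard_le_encard (insBall_one_subset_commonSupersequences hzS)
    · calc _ ≤ _ := Set.encard_le_encard (commonSupersequences_subset_insBall_one_union hz)
        _ ≤ _ := Set.encard_union_le _ _
        _ ≤ n + 3 + 2 := by grw [hzball, hM]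
        _ = (n + 5 : ℕ) := by push_cast; ring
  rw [← (Set.finite_of_encard_le_coe hcard.2).cast_ncard_eq] at hcard
  exact_mod_cast hcard

theorem stmt4 (n : ℕ) (hn : 3 ≤ n) (x y : List Bool)
    (hx : x.length = n) (hy : y.length = n)
    (h : (insBall 1 x ∩ insBall 1 y).ncard = 1) :
    n + 3 ≤ (insBall 2 x ∩ insBall 2 y).ncard ∧
    (insBall 2 x ∩ insBall 2 y).ncard ≤ n + 5 :=
  stmt4_general n x y hx hy h
end

section
/- Let n ≥ 3, a, b ∈ {0,1}, v ∈ {0,1}^{n−3}, and set x = a ā v b and y = ā v b b̄ (so x, y ∈ {0,1}^n). Suppose |I_1(x) ∩ I_1(y)| = 1. Then: (i) |I_2(x) ∩ I_2(y)| = n + 3 if and only if a ā v and v b b̄ are neither Type-A confusable nor Type-B confusable; (ii) |I_2(x) ∩ I_2(y)| = n + 4 if and only if a ā v and v b b̄ are Type-B confusable but not Type-A confusable; (iii) |I_2(x) ∩ I_2(y)| = n + 5 if and only if a ā v and v b b̄ are Type-A confusable. -/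
open List

/-!
Write `P = a ā v` and `Q = v b b̄`, so that `x = P b` and `y = ā Q`. The word
`w = a ā v b b̄ = a y = x b̄` contains both `x` and `y`, so `I₁(w) ⊆ I₂(x) ∩ I₂(y)`, which accounts
for `n + 3` words. If `P = Q`, then `ā x` would be a second element of `I₁(x) ∩ I₁(y)`, so `P ≠ Q`.
A word of `I₂(x) ∩ I₂(y)` not containing `w` must begin with `ā` and end with `b`, and stripping
these two letters is a bijection onto `I₁(P) ∩ I₁(Q)`.

For distinct words `p, q` of equal length, `|I₁(p) ∩ I₁(q)|` is `2`, `1` or `0` according as `p, q`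
are Type-A confusable, only Type-B confusable, or neither. After removing a common prefix,
`p = e p'` and `q = ē q'`, and the only candidates are `e ē q'` and `ē e p'`, which qualify iff
`p' ⊑ ē q'`, resp. `q' ⊑ e p'`. Both hold iff an alternating block sits at the front (Type A).
One of them holds iff one of `p`, `q` arises from the other by deleting its first letter and
inserting a letter further right, and every such shift is Type-A or Type-B confusable.
-/

namespace List

variable {α : Type*} {c d : α} {s u : List α}

theorem cons_sublist_cons_iff_of_ne (hne : c ≠ d) : c :: s <+ d :: u ↔ c :: s <+ u := by
  refine ⟨fun h => ?_, fun h => h.cons d⟩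
  cases h with
  | cons _ h => exact h
  | cons_cons => exact absurd rfl hne

theorem append_singleton_sublist_iff_of_ne (hne : c ≠ d) :
    s ++ [c] <+ u ++ [d] ↔ s ++ [c] <+ u := by
  rw [← reverse_sublist, ← reverse_sublist (l₂ := u)]
  simpa using cons_sublist_cons_iff_of_ne hne

theorem Sublist.exists_eq_insert {p z : List α} (h : p <+ z) (hl : z.length = p.length + 1) :
    ∃ (U V : List α) (c : α), p = U ++ V ∧ z = U ++ c :: V := by
  induction h with
  | slnil => simp at hl
  | @cons l₁ l₂ a h _ => exact ⟨[], l₂, a, h.eq_of_length (by simpa using hl.symm), rfl⟩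
  | @cons_cons l₁ l₂ a _ ih =>
      obtain ⟨U, V, c, rfl, rfl⟩ := ih (by simpa using hl)
      exact ⟨a :: U, V, c, rfl, rfl⟩

end List

namespace InsertionBall

theorem finite_insBall (t : ℕ) (x : List Bool) : (insBall t x).Finite :=
  (List.finite_length_eq Bool _).subset fun _ hz => hz.1

theorem insBall_one_cons (g : Bool) (w : List Bool) :
    insBall 1 (g :: w) = (g :: ·) '' insBall 1 w ∪ {(!g) :: g :: w} := by
  ext z
  constructor
  · rintro ⟨hz, hsub⟩
    obtain ⟨z0, zr, rfl⟩ := exists_cons_of_length_eq_add_one hz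
    by_cases h0 : z0 = g
    · subst h0
      exact Or.inl ⟨zr, ⟨by simpa using hz, cons_sublist_cons.mp hsub⟩, rfl⟩
    · have hzr := ((cons_sublist_cons_iff_of_ne (Ne.symm h0)).mp hsub).eq_of_length
        (by simpa using hz.symm)
      simp [Bool.eq_not_of_ne h0, hzr]
  · rintro (⟨zr, ⟨hz, hsub⟩, rfl⟩ | rfl)
    · exact ⟨by simpa using hz, hsub.cons_cons g⟩
    · exact ⟨by simp, sublist_cons_self _ _⟩

theorem ncard_insBall_one (w : List Bool) : (insBall 1 w).ncard = w.length + 2 := by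
  induction w with
  | nil =>
      have : insBall 1 [] = {[false], [true]} := by
        ext z
        rcases z with _ | ⟨c, _ | _⟩ <;> simp [insBall]
      simp [this]
  | cons g w ih =>
      have hdisj : Disjoint ((g :: ·) '' insBall 1 w) {(!g) :: g :: w} := by simp
      rw [insBall_one_cons, Set.ncard_union_eq hdisj ((finite_insBall 1 w).image _),
        Set.ncard_image_of_injective _ cons_injective, ih, Set.ncard_singleton, length_cons]

def altWord : Bool → ℕ → List Bool
  | _, 0 => []
  | a, k + 1 => a :: altWord (!a) k

@[simp] theorem altWord_zero (a : Bool) : altWord a 0 = [] := rfl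

@[simp] theorem altWord_succ (a : Bool) (k : ℕ) : altWord a (k + 1) = a :: altWord (!a) k := rfl

theorem bcompl_altWord (a : Bool) (k : ℕ) : bcompl (altWord a k) = altWord (!a) k := by
  induction k generalizing a with
  | zero => rfl
  | succ k ih =>
      change (!a) :: bcompl (altWord (!a) k) = _
      rw [ih]
      rfl

theorem altWord_sublist_succ (a : Bool) (k : ℕ) : altWord a k <+ altWord a (k + 1) := by
  induction k generalizing a with
  | zero => simp
  | succ k ih => exact (ih (!a)).cons_cons a

theorem wpow_succ (p : List Bool) (i : ℕ) : wpow p (i + 1) = p ++ wpow p i := by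
  simp [wpow, replicate_succ]

theorem wpow_eq_altWord (a : Bool) (i : ℕ) : wpow [a, !a] i = altWord a (2 * i) := by
  induction i with
  | zero => rfl
  | succ i ih => simp [wpow_succ, ih, Nat.mul_succ]

theorem wpow_append_eq_altWord (a : Bool) (j : ℕ) :
    wpow [a, !a] j ++ [a] = altWord a (2 * j + 1) := by
  induction j with
  | zero => rfl
  | succ j ih =>
      rw [wpow_succ, append_assoc, ih, show 2 * (j + 1) + 1 = 2 * j + 1 + 1 + 1 by ring]
      simp

theorem isAlt_iff {w : List Bool} : IsAlt w ↔ ∃ a k, 0 < k ∧ w = altWord a k := by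
  constructor
  · rintro ⟨a, ⟨i, hi, rfl⟩ | ⟨j, rfl⟩⟩
    · exact ⟨a, 2 * i, by omega, wpow_eq_altWord a i⟩
    · exact ⟨a, 2 * j + 1, by omega, wpow_append_eq_altWord a j⟩
  · rintro ⟨a, k, hk, rfl⟩
    obtain ⟨i, rfl | rfl⟩ := Nat.even_or_odd' k
    · exact ⟨a, Or.inl ⟨i, by omega, (wpow_eq_altWord a i).symm⟩⟩
    · exact ⟨a, Or.inr ⟨i, (wpow_append_eq_altWord a i).symm⟩⟩

theorem typeA_iff {x y : List Bool} : TypeA x y ↔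
    ∃ (u s : List Bool) (a : Bool) (k : ℕ), 0 < k ∧
      x = u ++ altWord a k ++ s ∧ y = u ++ altWord (!a) k ++ s := by
  constructor
  · rintro ⟨u, s, w, hw, rfl, rfl⟩
    obtain ⟨a, k, hk, rfl⟩ := isAlt_iff.mp hw
    exact ⟨u, s, a, k, hk, rfl, by rw [bcompl_altWord]⟩
  · rintro ⟨u, s, a, k, hk, rfl, rfl⟩
    exact ⟨u, s, altWord a k, isAlt_iff.mpr ⟨a, k, hk, rfl⟩, rfl, by rw [bcompl_altWord]⟩

theorem TypeA.symm {x y : List Bool} (h : TypeA x y) : TypeA y x := by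
  obtain ⟨u, s, a, k, hk, rfl, rfl⟩ := typeA_iff.mp h
  exact typeA_iff.mpr ⟨u, s, !a, k, hk, rfl, by rw [Bool.not_not]⟩

theorem typeA_cons_iff {g : Bool} {p q : List Bool} : TypeA (g :: p) (g :: q) ↔ TypeA p q := by
  simp only [typeA_iff]
  constructor
  · rintro ⟨_ | ⟨_, u⟩, s, a, k, hk, hp, hq⟩
    · obtain ⟨k, rfl⟩ := Nat.exists_eq_succ_of_ne_zero hk.ne'
      simp only [nil_append, altWord_succ, cons_append, cons.injEq] at hp hq
      simp [← hp.1] at hq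
    · simp only [cons_append, cons.injEq] at hp hq
      exact ⟨u, s, a, k, hk, hp.2, hq.2⟩
  · rintro ⟨u, s, a, k, hk, rfl, rfl⟩
    exact ⟨g :: u, s, a, k, hk, rfl, rfl⟩

def OrientedTypeB (x y : List Bool) : Prop :=
  ∃ (u v w : List Bool) (a b : Bool),
    x = u ++ [a, !a] ++ v ++ [b] ++ w ∧ y = u ++ [!a] ++ v ++ [b, !b] ++ w

theorem typeB_iff {x y : List Bool} : TypeB x y ↔ OrientedTypeB x y ∨ OrientedTypeB y x := by
  simp only [TypeB, OrientedTypeB, Set.pair_eq_pair_iff]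
  constructor
  · rintro ⟨u, v, w, a, b, ⟨rfl, rfl⟩ | ⟨rfl, rfl⟩⟩
    exacts [Or.inl ⟨u, v, w, a, b, rfl, rfl⟩, Or.inr ⟨u, v, w, a, b, rfl, rfl⟩]
  · rintro (⟨u, v, w, a, b, rfl, rfl⟩ | ⟨u, v, w, a, b, rfl, rfl⟩)
    exacts [⟨u, v, w, a, b, Or.inl ⟨rfl, rfl⟩⟩, ⟨u, v, w, a, b, Or.inr ⟨rfl, rfl⟩⟩]

theorem TypeB.symm {x y : List Bool} (h : TypeB x y) : TypeB y x :=
  typeB_iff.mpr (typeB_iff.mp h).symm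

theorem orientedTypeB_cons_iff {g : Bool} {p q : List Bool} :
    OrientedTypeB (g :: p) (g :: q) ↔ OrientedTypeB p q := by
  constructor
  · rintro ⟨_ | ⟨_, u⟩, v, w, a, b, hp, hq⟩
    · simp only [nil_append, cons_append, cons.injEq] at hp hq
      simp [← hp.1] at hq
    · simp only [cons_append, cons.injEq] at hp hq
      exact ⟨u, v, w, a, b, hp.2, hq.2⟩
  · rintro ⟨u, v, w, a, b, rfl, rfl⟩
    exact ⟨g :: u, v, w, a, b, rfl, rfl⟩

theorem typeB_cons_iff {g : Bool} {p q : List Bool} : TypeB (g :: p) (g :: q) ↔ TypeB p q := by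
  simp only [typeB_iff, orientedTypeB_cons_iff]

-- The deletion point moves right past a letter equal to `e`, the insertion point moves left past
-- a last letter of `s` equal to `f`; when neither is possible the pattern is Type A or Type B.
theorem typeA_or_typeB_of_shift : ∀ {u s v : List Bool} {e f : Bool},
    u ++ e :: s ++ v ≠ u ++ s ++ f :: v →
    TypeA (u ++ e :: s ++ v) (u ++ s ++ f :: v) ∨ TypeB (u ++ e :: s ++ v) (u ++ s ++ f :: v)
  | u, [], v, e, f, hne => by
      obtain rfl : f = !e := Bool.eq_not_of_ne (by rintro rfl; exact hne (by simp))
      exact Or.inl (typeA_iff.mpr ⟨u, v, e, 1, Nat.one_pos, by simp, by simp⟩)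
  | u, s0 :: s1, v, e, f, hne => by
      by_cases h0 : s0 = e
      · subst h0
        have := typeA_or_typeB_of_shift (u := u ++ [s0]) (s := s1) (v := v) (e := s0) (f := f)
          (by simpa using hne)
        simpa using this
      obtain rfl := Bool.eq_not_of_ne h0
      obtain rfl | ⟨V, B, rfl⟩ := eq_nil_or_concat' s1
      · by_cases hf : f = e
        · subst hf
          exact Or.inl (typeA_iff.mpr ⟨u, v, f, 2, two_pos, by simp, by simp⟩)
        · obtain rfl := Bool.eq_not_of_ne hf
          exact Or.inl (typeA_iff.mpr ⟨u, (!e) :: v, e, 1, Nat.one_pos, by simp, by simp⟩)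
      · by_cases hf : f = B
        · subst hf
          have := typeA_or_typeB_of_shift (u := u) (s := (!e) :: V) (v := f :: v) (e := e) (f := f)
            (by simp)
          simpa using this
        · obtain rfl := Bool.eq_not_of_ne hf
          exact Or.inr (typeB_iff.mpr (Or.inl ⟨u, V, v, e, B, by simp, by simp⟩))
termination_by _ s => s.length
decreasing_by all_goals simp_all

theorem typeA_cons_not_cons_of_sublist : ∀ {p q : List Bool} {e : Bool},
    p.length = q.length → p <+ (!e) :: q → q <+ e :: p →
    TypeA (e :: p) ((!e) :: q)
  | p, q, e, hl, hpq, hqp => by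
      by_cases hpq_eq : p = q
      · subst hpq_eq
        exact typeA_iff.mpr ⟨[], p, e, 1, Nat.one_pos, rfl, rfl⟩
      obtain ⟨p0, p', rfl⟩ := exists_cons_of_ne_nil (l := p) (by rintro rfl; simp_all [eq_comm])
      obtain ⟨q0, q', rfl⟩ := exists_cons_of_ne_nil (l := q) (by rintro rfl; simp at hl)
      have hp0 : p0 = !e := by
        by_contra h
        exact hpq_eq (((cons_sublist_cons_iff_of_ne h).mp hpq).eq_of_length hl)
      have hq0 : q0 = e := by
        by_contra h
        exact hpq_eq (((cons_sublist_cons_iff_of_ne h).mp hqp).eq_of_length hl.symm).symm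
      subst hp0 hq0
      have h := typeA_cons_not_cons_of_sublist (e := !q0) (by simpa using hl)
        (by simpa using cons_sublist_cons.mp hpq) (cons_sublist_cons.mp hqp)
      obtain ⟨_ | _, s, a, k, hk, hp, hq⟩ := typeA_iff.mp h
      · obtain rfl : a = !q0 := by cases k <;> simp_all
        exact typeA_iff.mpr ⟨[], s, q0, k + 1, k.succ_pos, by simp [hp], by simpa using hq⟩
      · simp only [cons_append, cons.injEq] at hp hq
        simp [← hp.1] at hq

theorem sublist_of_typeA_cons_not_cons {e : Bool} {p q : List Bool}
    (h : TypeA (e :: p) ((!e) :: q)) : p <+ (!e) :: q ∧ q <+ e :: p := by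
  obtain ⟨_ | _, s, a, _ | k, hk, hp, hq⟩ := typeA_iff.mp h
  · omega
  · simp only [nil_append, altWord_succ, cons_append, cons.injEq] at hp hq
    obtain ⟨rfl, rfl⟩ := hp
    obtain ⟨-, rfl⟩ := hq
    constructor
    · simpa using (altWord_sublist_succ (!e) k).append_right s
    · simpa using (altWord_sublist_succ e k).append_right s
  all_goals
    simp only [cons_append, cons.injEq] at hp hq
    simp [← hp.1] at hq

theorem sublist_or_of_typeB_cons_not_cons {e : Bool} {p q : List Bool}
    (h : TypeB (e :: p) ((!e) :: q)) : p <+ (!e) :: q ∨ q <+ e :: p := by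
  rcases typeB_iff.mp h with ⟨_ | _, v, w, a, b, hp, hq⟩ | ⟨_ | _, v, w, a, b, hq, hp⟩
  · simp only [nil_append, cons_append, cons.injEq] at hp hq
    obtain ⟨rfl, rfl⟩ := hp
    obtain ⟨-, rfl⟩ := hq
    left
    simp
  · simp only [cons_append, cons.injEq] at hp hq
    simp [← hp.1] at hq
  · simp only [nil_append, cons_append, cons.injEq] at hp hq
    obtain ⟨rfl, rfl⟩ := hq
    obtain ⟨-, rfl⟩ := hp
    right
    simp
  · simp only [cons_append, cons.injEq] at hp hq
    simp [← hp.1] at hq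

theorem typeA_or_typeB_of_sublist {e f : Bool} {p q : List Bool} (hne : e ≠ f)
    (hl : p.length = q.length) (h : p <+ f :: q) :
    TypeA (e :: p) (f :: q) ∨ TypeB (e :: p) (f :: q) := by
  obtain ⟨U, V, c, rfl, hq⟩ := h.exists_eq_insert (by simp [hl])
  have := typeA_or_typeB_of_shift (u := []) (s := U) (v := V) (e := e) (f := c)
    (by simp [← hq, hne])
  simpa [← hq] using this

theorem insBall_one_inter_cons {g : Bool} {p q : List Bool} (hne : p ≠ q)
    (hl : p.length = q.length) :
    insBall 1 (g :: p) ∩ insBall 1 (g :: q) = (g :: ·) '' (insBall 1 p ∩ insBall 1 q) := by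
  ext z
  constructor
  · rintro ⟨⟨hz, hp⟩, -, hq⟩
    obtain ⟨z0, zr, rfl⟩ := exists_cons_of_length_eq_add_one hz
    by_cases h0 : z0 = g
    · subst h0
      exact ⟨zr, ⟨⟨by simpa using hz, cons_sublist_cons.mp hp⟩, by simpa [hl] using hz,
        cons_sublist_cons.mp hq⟩, rfl⟩
    · have hpz := ((cons_sublist_cons_iff_of_ne (Ne.symm h0)).mp hp).eq_of_length
        (by simpa using hz.symm)
      have hqz := (cons_sublist_cons_iff_of_ne (Ne.symm h0)).mp hq
      rw [← hpz] at hqz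
      exact absurd ((cons_sublist_cons.mp hqz).eq_of_length hl.symm).symm hne
  · rintro ⟨zr, ⟨⟨hz, hp⟩, hz', hq⟩, rfl⟩
    exact ⟨⟨by simpa using hz, hp.cons_cons g⟩, by simpa using hz', hq.cons_cons g⟩

theorem insBall_one_inter_cons_not_cons {e : Bool} {p q : List Bool} (hl : p.length = q.length) :
    insBall 1 (e :: p) ∩ insBall 1 ((!e) :: q) =
      {z | z = e :: (!e) :: q ∧ p <+ (!e) :: q} ∪ {z | z = (!e) :: e :: p ∧ q <+ e :: p} := by
  ext z
  constructor
  · rintro ⟨⟨hz, hp⟩, -, hq⟩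
    obtain ⟨z0, zr, rfl⟩ := exists_cons_of_length_eq_add_one hz
    have hzr : zr.length = p.length + 1 := by simpa using hz
    cases Bool.eq_or_eq_not z0 e with
    | inl h0 =>
        subst h0
        have hqz := ((cons_sublist_cons_iff_of_ne (by simp)).mp hq).eq_of_length (by simp [hzr, hl])
        subst hqz
        exact Or.inl ⟨rfl, cons_sublist_cons.mp hp⟩
    | inr h0 =>
        subst h0
        have hpz := ((cons_sublist_cons_iff_of_ne (by simp)).mp hp).eq_of_length (by simp [hzr])
        subst hpz
        exact Or.inr ⟨rfl, cons_sublist_cons.mp hq⟩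
  · rintro (⟨rfl, h⟩ | ⟨rfl, h⟩)
    · exact ⟨⟨by simp [hl], h.cons_cons e⟩, by simp, sublist_cons_self _ _⟩
    · exact ⟨⟨by simp, sublist_cons_self _ _⟩, by simp [hl], h.cons_cons _⟩

theorem ncard_insBall_one_inter_cons_not_cons {e : Bool} {p q : List Bool}
    (hl : p.length = q.length) :
    (insBall 1 (e :: p) ∩ insBall 1 ((!e) :: q)).ncard =
      (if p <+ (!e) :: q then 1 else 0) + (if q <+ e :: p then 1 else 0) := by
  rw [insBall_one_inter_cons_not_cons hl]
  by_cases hp : p <+ (!e) :: q <;> by_cases hq : q <+ e :: p <;> simp [hp, hq]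

theorem typeA_cons_not_cons_iff {e : Bool} {p q : List Bool} (hl : p.length = q.length) :
    TypeA (e :: p) ((!e) :: q) ↔ p <+ (!e) :: q ∧ q <+ e :: p :=
  ⟨sublist_of_typeA_cons_not_cons, fun h => typeA_cons_not_cons_of_sublist hl h.1 h.2⟩

theorem typeA_or_typeB_cons_not_cons_iff {e : Bool} {p q : List Bool}
    (hl : p.length = q.length) :
    TypeA (e :: p) ((!e) :: q) ∨ TypeB (e :: p) ((!e) :: q) ↔ p <+ (!e) :: q ∨ q <+ e :: p := by
  constructor
  · rintro (h | h)
    exacts [Or.inl (sublist_of_typeA_cons_not_cons h).1, sublist_or_of_typeB_cons_not_cons h]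
  · rintro (h | h)
    · exact typeA_or_typeB_of_sublist (by simp) hl h
    · exact (typeA_or_typeB_of_sublist (by simp) hl.symm h).imp TypeA.symm TypeB.symm

open scoped Classical in
theorem ncard_insBall_one_inter : ∀ {p q : List Bool}, p ≠ q → p.length = q.length →
    (insBall 1 p ∩ insBall 1 q).ncard = if TypeA p q then 2 else if TypeB p q then 1 else 0
  | [], [], hne, _ => absurd rfl hne
  | [], _ :: _, _, hl | _ :: _, [], _, hl => by simp at hl
  | e :: p, q0 :: q, hne, hl => by
      have hl' : p.length = q.length := by simpa using hl
      by_cases h0 : q0 = e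
      · subst h0
        have hne' : p ≠ q := by rintro rfl; exact hne rfl
        rw [insBall_one_inter_cons hne' hl', Set.ncard_image_of_injective _ cons_injective,
          typeA_cons_iff, typeB_cons_iff, ncard_insBall_one_inter hne' hl']
      · obtain rfl := Bool.eq_not_of_ne h0
        have hA := typeA_cons_not_cons_iff (e := e) hl'
        have hAB := typeA_or_typeB_cons_not_cons_iff (e := e) hl'
        rw [ncard_insBall_one_inter_cons_not_cons hl']
        by_cases hp : p <+ (!e) :: q <;> by_cases hq : q <+ e :: p <;> simp_all

theorem ncard_insBall_two_inter {x y w : List Bool} (hx : x <+ w) (hy : y <+ w)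
    (hxw : w.length = x.length + 1) (hyw : w.length = y.length + 1) :
    (insBall 2 x ∩ insBall 2 y).ncard =
      w.length + 2 + ((insBall 2 x ∩ insBall 2 y) \ {z | w <+ z}).ncard := by
  have hw : insBall 2 x ∩ insBall 2 y ∩ {z | w <+ z} = insBall 1 w := by
    ext z
    constructor
    · rintro ⟨⟨⟨hz, -⟩, -⟩, hwz⟩
      exact ⟨by omega, hwz⟩
    · rintro ⟨hz, hwz⟩
      exact ⟨⟨⟨by omega, hx.trans hwz⟩, by omega, hy.trans hwz⟩, hwz⟩
  rw [← Set.ncard_inter_add_ncard_sdiff_eq_ncard _ {z | w <+ z}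
    ((finite_insBall 2 x).inter_of_left _), hw, ncard_insBall_one]

theorem insBall_two_inter_sdiff (a b : Bool) (v : List Bool) :
    (insBall 2 ([a, !a] ++ v ++ [b]) ∩ insBall 2 ([!a] ++ v ++ [b, !b])) \
        {z | [a, !a] ++ v ++ [b, !b] <+ z} =
      (fun z => (!a) :: (z ++ [b])) '' (insBall 1 ([a, !a] ++ v) ∩ insBall 1 (v ++ [b, !b])) := by
  have hxw : [a, !a] ++ v ++ [b, !b] = ([a, !a] ++ v ++ [b]) ++ [!b] := by simp
  have hyw : [a, !a] ++ v ++ [b, !b] = a :: ([!a] ++ v ++ [b, !b]) := by simp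
  ext z
  constructor
  · rintro ⟨⟨⟨hz, hx⟩, -, hy⟩, hw⟩
    obtain ⟨z0, zr, rfl⟩ := exists_cons_of_length_eq_add_one hz
    obtain rfl : z0 = !a := by
      refine Bool.eq_not_of_ne fun h0 => hw ?_
      subst h0
      rw [hyw]
      exact ((cons_sublist_cons_iff_of_ne (by simp)).mp hy).cons_cons z0
    obtain rfl | ⟨z', B, rfl⟩ := eq_nil_or_concat' zr
    · simp at hz
    rw [← cons_append] at hx
    obtain rfl : b = B := by
      by_contra hB
      obtain rfl := Bool.eq_not_of_ne (Ne.symm hB)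
      refine hw ?_
      rw [← cons_append, hxw]
      exact ((append_singleton_sublist_iff_of_ne (by simp)).mp hx).append_right _
    refine ⟨z', ⟨⟨by simpa using hz, ?_⟩, by simpa using hz, ?_⟩, rfl⟩
    · exact (cons_sublist_cons_iff_of_ne (by simp)).mp ((append_sublist_append_right [b]).mp hx)
    · have hy' : (v ++ [b]) ++ [!b] <+ z' ++ [b] := by simpa using cons_sublist_cons.mp hy
      simpa using (append_singleton_sublist_iff_of_ne (by simp)).mp hy'
  · rintro ⟨z', ⟨⟨hz', hP⟩, -, hQz⟩, rfl⟩
    refine ⟨⟨⟨by simp_all, ?_⟩, by simp_all, ?_⟩, fun hw => ?_⟩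
    · exact ((append_sublist_append_right [b]).mpr hP).cons _
    · exact (hQz.trans (sublist_append_left _ _)).cons_cons _
    · rw [hyw] at hw
      have hw' := (cons_sublist_cons_iff_of_ne (by simp)).mp hw
      rw [← hyw, hxw] at hw'
      have := ((append_singleton_sublist_iff_of_ne (by simp)).mp hw').length_le
      simp only [length_append, length_cons, length_nil] at this hz'
      omega

theorem ne_of_ncard_insBall_one_inter_eq_one {a b : Bool} {v : List Bool}
    (h : (insBall 1 ([a, !a] ++ v ++ [b]) ∩ insBall 1 ([!a] ++ v ++ [b, !b])).ncard = 1) :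
    [a, !a] ++ v ≠ v ++ [b, !b] := by
  intro hPQ
  obtain ⟨z, hz⟩ := Set.ncard_eq_one.mp h
  have hw : [a, !a] ++ v ++ [b, !b] ∈ insBall 1 ([a, !a] ++ v ++ [b]) ∩
      insBall 1 ([!a] ++ v ++ [b, !b]) :=
    ⟨⟨by simp, by simp⟩, by simp, by simp⟩
  have hax : (!a) :: ([a, !a] ++ v ++ [b]) ∈ insBall 1 ([a, !a] ++ v ++ [b]) ∩
      insBall 1 ([!a] ++ v ++ [b, !b]) :=
    ⟨⟨by simp, sublist_cons_self _ _⟩, by simp, by simp [← hPQ]⟩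
  rw [hz] at hw hax
  simpa using hw.trans hax.symm

end InsertionBall

open InsertionBall in
theorem stmt5 (n : ℕ) (hn : 3 ≤ n) (a b : Bool) (v : List Bool)
    (hv : v.length = n - 3) (x y : List Bool)
    (hx : x = [a, !a] ++ v ++ [b]) (hy : y = [!a] ++ v ++ [b, !b])
    (h : (insBall 1 x ∩ insBall 1 y).ncard = 1) :
    ((insBall 2 x ∩ insBall 2 y).ncard = n + 3 ↔
        (¬ TypeA ([a, !a] ++ v) (v ++ [b, !b]) ∧
         ¬ TypeB ([a, !a] ++ v) (v ++ [b, !b]))) ∧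
    ((insBall 2 x ∩ insBall 2 y).ncard = n + 4 ↔
        (TypeB ([a, !a] ++ v) (v ++ [b, !b]) ∧
         ¬ TypeA ([a, !a] ++ v) (v ++ [b, !b]))) ∧
    ((insBall 2 x ∩ insBall 2 y).ncard = n + 5 ↔
        TypeA ([a, !a] ++ v) (v ++ [b, !b])) := by
  subst hx hy
  have hcount : (insBall 2 ([a, !a] ++ v ++ [b]) ∩ insBall 2 ([!a] ++ v ++ [b, !b])).ncard =
      n + 3 + (insBall 1 ([a, !a] ++ v) ∩ insBall 1 (v ++ [b, !b])).ncard := by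
    rw [ncard_insBall_two_inter (w := [a, !a] ++ v ++ [b, !b]) (by simp) (by simp) (by simp)
      (by simp), insBall_two_inter_sdiff,
      Set.ncard_image_of_injective _ (by simp [Function.Injective])]
    simp only [length_append, length_cons, length_nil]
    omega
  classical
  rw [hcount, ncard_insBall_one_inter (ne_of_ncard_insBall_one_inter_eq_one h) (by simp)]
  generalize TypeA ([a, !a] ++ v) (v ++ [b, !b]) = A, TypeB ([a, !a] ++ v) (v ++ [b, !b]) = B
  by_cases hA : A <;> by_cases hB : B <;> simp [hA, hB]
end

section
/- Let n ≥ 4 and let x, y be distinct binary sequences of length n. Then: (i) |I_1(x) ∩ I_1(y)| = 2 if and only if |I_2(x) ∩ I_2(y)| = 2n + 4; (ii) |I_1(x) ∩ I_1(y)| = 1 if and only if n + 3 ≤ |I_2(x) ∩ I_2(y)| ≤ n + 5; (iii) |I_1(x) ∩ I_1(y)| = 0 if and only if |I_2(x) ∩ I_2(y)| ≤ 6. -/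
open List

/-! Sort the common supersequences `z = c z'` of two words by their first letter `c`: a word
starting with `c` is a subsequence of `z` iff its tail is one of `z'`, any other word must be a
subsequence of `z'`. Prepending a common letter to `x` and `y` therefore keeps
`k = |I₁(x) ∩ I₁(y)|` and adds `k` to `N = |I₂(x) ∩ I₂(y)|`. At the first position where
`x = a x'` and `y = ā y'` differ, `k` and `N` split into the counts for `(x', ā y')` and
`(a x', y')`, pairs `(u, v)` with `|v| = |u| + 1`; such a pair has exactly `|v| + 2` common
supersequences of length `|v| + 1` if `u` is a subsequence of `v`, and at most `3` otherwise. -/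

theorem List.cons_sublist_cons_of_ne {α : Type*} {a b : α} {l l' : List α} (h : a ≠ b) :
    a :: l <+ b :: l' ↔ a :: l <+ l' :=
  ⟨List.Sublist.of_cons_of_ne h, fun h' => h'.cons b⟩

theorem finite_setOf_length_eq_and (m : ℕ) (P : List Bool → Prop) :
    {z : List Bool | z.length = m ∧ P z}.Finite :=
  (List.finite_length_eq Bool m).subset fun _ hz => hz.1

theorem ncard_setOf_length_succ_and (m : ℕ) (P : List Bool → Prop) (c : Bool) :
    {z : List Bool | z.length = m + 1 ∧ P z}.ncard =
      {z | z.length = m ∧ P (c :: z)}.ncard + {z | z.length = m ∧ P ((!c) :: z)}.ncard := by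
  have hsplit : {z : List Bool | z.length = m + 1 ∧ P z} =
      List.cons c '' {z | z.length = m ∧ P (c :: z)} ∪
        List.cons (!c) '' {z | z.length = m ∧ P ((!c) :: z)} := by
    ext (_ | ⟨d, z⟩)
    · simp
    · cases c <;> cases d <;> simp
  have hdisj : Disjoint (List.cons c '' {z | z.length = m ∧ P (c :: z)})
      (List.cons (!c) '' {z | z.length = m ∧ P ((!c) :: z)}) := by
    refine Set.disjoint_left.2 ?_
    rintro _ ⟨z, -, rfl⟩ ⟨w, -, h⟩
    exact Bool.not_ne_self c (List.cons.inj h).1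
  rw [hsplit, Set.ncard_union_eq hdisj ((finite_setOf_length_eq_and _ _).image _)
      ((finite_setOf_length_eq_and _ _).image _),
    Set.ncard_image_of_injective _ List.cons_injective,
    Set.ncard_image_of_injective _ List.cons_injective]

noncomputable def superseqCount (m : ℕ) (x y : List Bool) : ℕ :=
  {z : List Bool | z.length = m ∧ x <+ z ∧ y <+ z}.ncard

theorem ncard_insBall_inter_insBall (t : ℕ) {x y : List Bool} (h : x.length = y.length) :
    (insBall t x ∩ insBall t y).ncard = superseqCount (x.length + t) x y := by
  unfold superseqCount insBall
  congr 1
  ext z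
  simp only [Set.mem_inter_iff, Set.mem_ofPred_eq, h]
  tauto

theorem superseqCount_comm (m : ℕ) (x y : List Bool) :
    superseqCount m x y = superseqCount m y x := by
  simp only [superseqCount, and_comm]

theorem superseqCount_of_sublist (m : ℕ) {x y : List Bool} (h : x <+ y) :
    superseqCount m x y = superseqCount m y y := by
  unfold superseqCount
  congr 1
  ext z
  exact ⟨fun ⟨hz, _, hyz⟩ => ⟨hz, hyz, hyz⟩, fun ⟨hz, _, hyz⟩ => ⟨hz, h.trans hyz, hyz⟩⟩

theorem superseqCount_pos {m : ℕ} {x y z : List Bool} (hz : z.length = m) (hxz : x <+ z)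
    (hyz : y <+ z) : 0 < superseqCount m x y :=
  (Set.ncard_pos (finite_setOf_length_eq_and _ _)).2 ⟨z, hz, hxz, hyz⟩

theorem superseqCount_of_length_left {m : ℕ} {x : List Bool} (y : List Bool)
    (h : x.length = m) : superseqCount m x y = if y <+ x then 1 else 0 := by
  have hx : ∀ z : List Bool, z.length = m → x <+ z → z = x := fun z hz hxz =>
    (hxz.eq_of_length (by rw [h, hz])).symm
  unfold superseqCount
  split_ifs with hyx
  · refine Set.ncard_eq_one.2 ⟨x, Set.eq_singleton_iff_unique_mem.2 ⟨⟨h, .refl x, hyx⟩, ?_⟩⟩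
    exact fun z ⟨hz, hxz, _⟩ => hx z hz hxz
  · convert Set.ncard_empty (List Bool)
    refine Set.eq_empty_iff_forall_notMem.2 ?_
    rintro z ⟨hz, hxz, hyz⟩
    exact hyx (hx z hz hxz ▸ hyz)

theorem superseqCount_of_length_left_le_one {m : ℕ} {x : List Bool} (y : List Bool)
    (h : x.length = m) : superseqCount m x y ≤ 1 := by
  rw [superseqCount_of_length_left y h]
  split <;> omega

theorem superseqCount_cons_cons (m : ℕ) (c : Bool) (x y : List Bool) :
    superseqCount (m + 1) (c :: x) (c :: y) =
      superseqCount m x y + superseqCount m (c :: x) (c :: y) := by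
  unfold superseqCount
  rw [ncard_setOf_length_succ_and m _ c]
  simp only [List.cons_sublist_cons, List.cons_sublist_cons_of_ne (Bool.self_ne_not c)]

theorem superseqCount_cons_cons_not (m : ℕ) (a : Bool) (x y : List Bool) :
    superseqCount (m + 1) (a :: x) ((!a) :: y) =
      superseqCount m x ((!a) :: y) + superseqCount m (a :: x) y := by
  unfold superseqCount
  rw [ncard_setOf_length_succ_and m _ a]
  simp only [List.cons_sublist_cons, List.cons_sublist_cons_of_ne (Bool.self_ne_not a),
    List.cons_sublist_cons_of_ne (Bool.not_ne_self a)]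

theorem superseqCount_length_succ_self (v : List Bool) :
    superseqCount (v.length + 1) v v = v.length + 2 := by
  induction v with
  | nil =>
    show {z : List Bool | z.length = 0 + 1 ∧ _}.ncard = 2
    rw [ncard_setOf_length_succ_and 0 _ true]
    simp [List.length_eq_zero_iff]
  | cons c v ih =>
    rw [List.length_cons, superseqCount_cons_cons, ih,
      superseqCount_of_length_left _ (by simp), if_pos (.refl _)]

theorem superseqCount_length_succ_le_two {x y : List Bool} (hne : x ≠ y)
    (hlen : x.length = y.length) : superseqCount (x.length + 1) x y ≤ 2 := by
  induction x generalizing y with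
  | nil => exact absurd (List.length_eq_zero_iff.1 hlen.symm).symm hne
  | cons e x ih =>
    obtain _ | ⟨c, y⟩ := y
    · simp at hlen
    simp only [List.length_cons, Nat.add_right_cancel_iff] at hlen
    obtain rfl | rfl : c = e ∨ c = !e := by cases c <;> cases e <;> simp
    · have hsub : ¬ c :: y <+ c :: x := fun h => hne (h.eq_of_length (by simp [hlen])).symm
      rw [superseqCount_cons_cons, superseqCount_of_length_left _ rfl, if_neg hsub]
      exact ih (fun h => hne (h ▸ rfl)) hlen
    · have h₁ := superseqCount_of_length_left_le_one x
        (show ((!e) :: y).length = (e :: x).length by simp [hlen])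
      have h₂ := superseqCount_of_length_left_le_one y (x := e :: x) rfl
      rw [superseqCount_comm] at h₁
      rw [superseqCount_cons_cons_not]
      omega

theorem superseqCount_length_succ_le_three {u v : List Bool} (hsub : ¬ u <+ v)
    (hlen : u.length + 1 = v.length) : superseqCount (v.length + 1) u v ≤ 3 := by
  induction v generalizing u with
  | nil => simp at hlen
  | cons c v ih =>
    obtain _ | ⟨e, u⟩ := u
    · exact absurd (List.nil_sublist _) hsub
    simp only [List.length_cons, Nat.add_right_cancel_iff] at hlen
    obtain rfl | rfl : c = e ∨ c = !e := by cases c <;> cases e <;> simp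
    · rw [superseqCount_cons_cons, superseqCount_comm _ (c :: u),
        superseqCount_of_length_left _ rfl, if_neg hsub]
      exact ih (fun h => hsub (List.cons_sublist_cons.2 h)) hlen
    · have h₁ := superseqCount_of_length_left_le_one u (x := (!e) :: v) rfl
      have h₂ := superseqCount_length_succ_le_two (x := e :: u) (y := v)
        (fun h => hsub (h ▸ List.sublist_cons_self _ _)) (by simp [hlen])
      rw [superseqCount_comm] at h₁
      rw [superseqCount_cons_cons_not]
      simp only [List.length_cons, hlen] at h₁ h₂ ⊢
      omega

def SecondCountBound (n k N : ℕ) : Prop :=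
  (k = 2 → N = 2 * n + 4) ∧ (k = 1 → n + 3 ≤ N ∧ N ≤ n + 5) ∧ (k = 0 → N ≤ 6)

theorem SecondCountBound.succ {n k N : ℕ} (h : SecondCountBound n k N) :
    SecondCountBound (n + 1) k (N + k) := by
  unfold SecondCountBound at *
  omega

theorem secondCountBound_cons_cons_not (e : Bool) {x y : List Bool}
    (hlen : x.length = y.length) :
    SecondCountBound (x.length + 1) (superseqCount (x.length + 2) (e :: x) ((!e) :: y))
      (superseqCount (x.length + 3) (e :: x) ((!e) :: y)) := by
  have hlen' : ((!e) :: y).length = x.length + 1 := by simp [hlen]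
  have hA_sub (h : x <+ (!e) :: y) :
      superseqCount (x.length + 2) x ((!e) :: y) = x.length + 3 := by
    simpa [superseqCount_of_sublist _ h, hlen'] using superseqCount_length_succ_self ((!e) :: y)
  have hB_sub (h : y <+ e :: x) : superseqCount (x.length + 2) (e :: x) y = x.length + 3 := by
    simpa [superseqCount_comm _ (e :: x), superseqCount_of_sublist _ h] using
      superseqCount_length_succ_self (e :: x)
  have hA_not (h : ¬ x <+ (!e) :: y) : superseqCount (x.length + 2) x ((!e) :: y) ≤ 3 := by
    simpa [hlen'] using superseqCount_length_succ_le_three h hlen'.symm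
  have hB_not (h : ¬ y <+ e :: x) : superseqCount (x.length + 2) (e :: x) y ≤ 3 := by
    simpa [superseqCount_comm _ (e :: x), hlen] using
      superseqCount_length_succ_le_three h (by simp [hlen])
  have hA_pos (h : y <+ e :: x) : 0 < superseqCount (x.length + 2) x ((!e) :: y) :=
    superseqCount_pos (z := (!e) :: e :: x) (by simp) ((List.sublist_cons_self _ _).cons _)
      (List.cons_sublist_cons.2 h)
  have hB_pos (h : x <+ (!e) :: y) : 0 < superseqCount (x.length + 2) (e :: x) y :=
    superseqCount_pos (z := e :: (!e) :: y) (by simp [hlen]) (List.cons_sublist_cons.2 h)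
      ((List.sublist_cons_self _ _).cons _)
  rw [superseqCount_cons_cons_not (x.length + 1), superseqCount_cons_cons_not (x.length + 2),
    superseqCount_comm (x.length + 1) x, superseqCount_of_length_left x hlen',
    superseqCount_of_length_left (m := x.length + 1) (x := e :: x) y rfl]
  unfold SecondCountBound
  split_ifs with hxy hyx hyx
  · have := hA_sub hxy; have := hB_sub hyx; grind
  · have := hA_sub hxy; have := hB_not hyx; have := hB_pos hxy; grind
  · have := hA_not hxy; have := hB_sub hyx; have := hA_pos hyx; grind
  · have := hA_not hxy; have := hB_not hyx; grind

theorem secondCountBound_superseqCount {x y : List Bool} (hne : x ≠ y)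
    (hlen : x.length = y.length) :
    SecondCountBound x.length (superseqCount (x.length + 1) x y)
      (superseqCount (x.length + 2) x y) := by
  induction x generalizing y with
  | nil => exact absurd (List.length_eq_zero_iff.1 hlen.symm).symm hne
  | cons e x ih =>
    obtain _ | ⟨c, y⟩ := y
    · simp at hlen
    simp only [List.length_cons, Nat.add_right_cancel_iff] at hlen ⊢
    obtain rfl | rfl : c = e ∨ c = !e := by cases c <;> cases e <;> simp
    · have hsub : ¬ c :: y <+ c :: x := fun h => hne (h.eq_of_length (by simp [hlen])).symm
      have h₀ : superseqCount (x.length + 1) (c :: x) (c :: y) = 0 := by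
        rw [superseqCount_of_length_left (m := x.length + 1) (x := c :: x) _ rfl,
          if_neg hsub]
      rw [superseqCount_cons_cons (x.length + 1), superseqCount_cons_cons (x.length + 2),
        superseqCount_cons_cons (x.length + 1), h₀, Nat.add_zero]
      exact (ih (fun h => hne (h ▸ rfl)) hlen).succ
    · exact secondCountBound_cons_cons_not e hlen

theorem stmt6 (n : ℕ) (hn : 4 ≤ n) (x y : List Bool)
    (hx : x.length = n) (hy : y.length = n) (hne : x ≠ y) :
    ((insBall 1 x ∩ insBall 1 y).ncard = 2 ↔
        (insBall 2 x ∩ insBall 2 y).ncard = 2 * n + 4) ∧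
    ((insBall 1 x ∩ insBall 1 y).ncard = 1 ↔
        (n + 3 ≤ (insBall 2 x ∩ insBall 2 y).ncard ∧
         (insBall 2 x ∩ insBall 2 y).ncard ≤ n + 5)) ∧
    ((insBall 1 x ∩ insBall 1 y).ncard = 0 ↔
        (insBall 2 x ∩ insBall 2 y).ncard ≤ 6) := by
  have hlen : x.length = y.length := hx.trans hy.symm
  have hk := superseqCount_length_succ_le_two hne hlen
  have hN := secondCountBound_superseqCount hne hlen
  rw [ncard_insBall_inter_insBall 1 hlen, ncard_insBall_inter_insBall 2 hlen]
  rw [hx] at hk hN ⊢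
  unfold SecondCountBound at hN
  omega
end

section
/- Let n ≥ 4 and set P = 3⌈log₂ n⌉ + 12. Then there exist c ∈ Z_{1+P} and d ∈ Z_2 such that the code C(n;c,d) = { x ∈ R(n, 3, P/3) : Inv(x) ≡ c (mod 1+P) and wt_H(x) ≡ d (mod 2) } satisfies |C(n;c,d)| ≥ 2^{n−1} / (2(1+P)). -/
open List

/-! A window of length `t + 1` with period `p ≤ ℓ` is the periodic extension of its first `p`
letters, so a word of length `n` containing such a window is determined by the window's position,
those `p ≤ ℓ` letters and the `n - t - 1` letters outside it: at most `n · 2^(ℓ+1) · 2^(n-t-1)`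
words. For `ℓ = 3` and `t = ⌈log₂ n⌉ + 4` this is at most `2^(n-1)`, so `R(n, 3, t)` has at least
`2^(n-1)` elements, and by pigeonhole one of the `2(1 + P)` classes of `(Inv mod 1 + P, wt mod 2)`
gets its share. -/

open Finset

noncomputable def words (n : ℕ) : Finset (List Bool) :=
  (univ : Finset (List.Vector Bool n)).image List.Vector.toList

lemma mem_words {n : ℕ} {x : List Bool} : x ∈ words n ↔ x.length = n := by
  simp only [words, mem_image, mem_univ, true_and]
  exact ⟨fun ⟨v, hv⟩ => hv ▸ v.2, fun h => ⟨⟨x, h⟩, rfl⟩⟩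

lemma card_words (n : ℕ) : #(words n) = 2 ^ n := by
  rw [words, card_image_of_injective _ List.Vector.toList_injective, card_univ, card_vector,
    Fintype.card_bool]

noncomputable def wordsUpTo (ℓ : ℕ) : Finset (List Bool) :=
  (Finset.range (ℓ + 1)).biUnion words

lemma card_wordsUpTo_lt (ℓ : ℕ) : #(wordsUpTo ℓ) < 2 ^ (ℓ + 1) :=
  calc #(wordsUpTo ℓ) ≤ ∑ k ∈ Finset.range (ℓ + 1), #(words k) := card_biUnion_le
    _ = ∑ k ∈ Finset.range (ℓ + 1), 2 ^ k := by simp only [card_words]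
    _ < 2 ^ (ℓ + 1) := Nat.geomSum_lt le_rfl fun _ => Finset.mem_range.mp

lemma IsPeriodOf.getD_mod {p : ℕ} {s : List Bool} (hs : IsPeriodOf p s) {i : ℕ}
    (hi : i < s.length) : s.getD i false = s.getD (i % p) false := by
  obtain rfl | hp := p.eq_zero_or_pos
  · rw [Nat.mod_zero]
  induction i using Nat.strong_induction_on with
  | _ i ih =>
    rcases lt_or_ge i p with hip | hpi
    · rw [Nat.mod_eq_of_lt hip]
    · have hstep := hs (i - p) (by omega)
      rw [Nat.sub_add_cancel hpi] at hstep
      rw [← hstep, ih (i - p) (by omega) (by omega), Nat.mod_eq_sub_mod hpi]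

def periodicExt (w : List Bool) (m : ℕ) : List Bool :=
  List.ofFn fun j : Fin m => w.getD (j % w.length) false

lemma IsPeriodOf.periodicExt_take {p m : ℕ} {s : List Bool} (hs : IsPeriodOf p s) (hp : 0 < p)
    (hsm : s.length = m) (hpm : p ≤ m) : periodicExt (s.take p) m = s := by
  refine List.ext_getElem (by rw [periodicExt, List.length_ofFn, hsm]) fun j hj hjs => ?_
  have hlen : (s.take p).length = p := by simp [hsm, hpm]
  simp only [periodicExt, List.getElem_ofFn, hlen]
  rw [← List.getD_eq_getElem s false hjs, hs.getD_mod hjs]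
  simp only [List.getD_eq_getElem?_getD, List.getElem?_take_of_lt (Nat.mod_lt j hp)]

lemma PeriodLe.take {s : List Bool} {ℓ : ℕ} (h : PeriodLe s ℓ) (m : ℕ) :
    PeriodLe (s.take m) ℓ := by
  obtain ⟨p, hp, hpℓ, hs⟩ := h
  refine ⟨p, hp, hpℓ, fun i hi => ?_⟩
  simp only [List.length_take] at hi
  simp only [List.getD_eq_getElem?_getD, List.getElem?_take_of_lt (by omega : i < m),
    List.getElem?_take_of_lt (by omega : i + p < m)]
  simpa only [List.getD_eq_getElem?_getD] using hs i (by omega)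

def HasPeriodicWindow (ℓ m : ℕ) (x : List Bool) : Prop :=
  ∃ i, i + m ≤ x.length ∧ PeriodLe ((x.drop i).take m) ℓ

lemma mem_Rset_of_not_hasPeriodicWindow {n ℓ t : ℕ} {x : List Bool} (hx : x.length = n)
    (h : ¬ HasPeriodicWindow ℓ (t + 1) x) : x ∈ Rset n ℓ t := by
  refine ⟨hx, fun s ⟨u, v, huv⟩ hper => ?_⟩
  by_contra! hlong
  have hdrop : x.drop u.length = s ++ v := by
    rw [← huv, List.append_assoc, List.drop_left]
  have hwindow : (x.drop u.length).take (t + 1) = s.take (t + 1) := by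
    rw [hdrop, List.take_append_of_le_length hlong]
  refine h ⟨u.length, ?_, hwindow ▸ hper.take (t + 1)⟩
  have := congrArg List.length huv
  simp only [List.length_append] at this
  omega

open Classical in
lemma card_filter_hasPeriodicWindow_le {n ℓ m : ℕ} (hℓm : ℓ ≤ m) :
    #((words n).filter (HasPeriodicWindow ℓ m)) ≤ (n - m + 1) * 2 ^ (ℓ + 1) * 2 ^ (n - m) := by
  let splice : ℕ × List Bool × List Bool → List Bool := fun ⟨i, w, r⟩ =>
    r.take i ++ periodicExt w m ++ r.drop i
  suffices hsub : (words n).filter (HasPeriodicWindow ℓ m) ⊆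
      (Finset.range (n - m + 1) ×ˢ wordsUpTo ℓ ×ˢ words (n - m)).image splice by
    calc _ ≤ _ := card_le_card hsub
      _ ≤ _ := card_image_le
      _ ≤ _ := by
        rw [card_product, card_product, card_range, card_words, ← mul_assoc]
        gcongr
        exact (card_wordsUpTo_lt ℓ).le
  intro x hx
  obtain ⟨hxn, i, him, p, hp, hpℓ, hper⟩ := Finset.mem_filter.mp hx
  rw [mem_words] at hxn
  have hwlen : ((x.drop i).take m).length = m := by simp; omega
  refine mem_image.mpr ⟨(i, ((x.drop i).take m).take p, x.take i ++ x.drop (i + m)), ?_, ?_⟩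
  · simp only [Finset.mem_product, Finset.mem_range, wordsUpTo, mem_biUnion, mem_words,
      List.length_append, List.length_take, List.length_drop]
    exact ⟨by omega, ⟨p, by omega, by omega⟩, by omega⟩
  · have hpre : (x.take i).length = i := by simp; omega
    simp only [splice, List.take_left' hpre, List.drop_left' hpre]
    rw [hper.periodicExt_take hp hwlen (by omega), List.append_assoc,
      show x.drop (i + m) = (x.drop i).drop m by rw [List.drop_drop], List.take_append_drop,
      List.take_append_drop]

open Classical in
lemma card_filter_hasPeriodicWindow_add_le {n ℓ t : ℕ} (hℓt : ℓ ≤ t + 1)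
    (h : n * 2 ^ (ℓ + 1) ≤ 2 ^ t) :
    #((words n).filter (HasPeriodicWindow ℓ (t + 1))) + 2 ^ (n - 1) ≤ 2 ^ n := by
  rcases lt_or_ge n (t + 1) with hnt | htn
  · have hempty : (words n).filter (HasPeriodicWindow ℓ (t + 1)) = ∅ :=
      Finset.filter_eq_empty_iff.mpr fun x hx ⟨_, hi, _⟩ => by rw [mem_words.mp hx] at hi; omega
    rw [hempty, card_empty, zero_add]
    exact Nat.pow_le_pow_right two_pos (Nat.sub_le n 1)
  · have hsplit : 2 ^ n = 2 ^ (n - 1) + 2 ^ (n - 1) := by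
      rw [← two_mul, ← pow_succ']; congr 1; omega
    have : #((words n).filter (HasPeriodicWindow ℓ (t + 1))) ≤ 2 ^ (n - 1) :=
      calc _ ≤ (n - (t + 1) + 1) * 2 ^ (ℓ + 1) * 2 ^ (n - (t + 1)) :=
            card_filter_hasPeriodicWindow_le hℓt
        _ ≤ n * 2 ^ (ℓ + 1) * 2 ^ (n - (t + 1)) := by gcongr; omega
        _ ≤ 2 ^ t * 2 ^ (n - (t + 1)) := by gcongr
        _ = 2 ^ (n - 1) := by rw [← pow_add]; congr 1; omega
    omega

open Classical in
lemma two_pow_pred_le_card_Rset {n ℓ t : ℕ} (hℓt : ℓ ≤ t + 1) (h : n * 2 ^ (ℓ + 1) ≤ 2 ^ t) :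
    2 ^ (n - 1) ≤ #((words n).filter (· ∈ Rset n ℓ t)) := by
  have hgood : words n \ (words n).filter (HasPeriodicWindow ℓ (t + 1)) ⊆
      (words n).filter (· ∈ Rset n ℓ t) := by
    intro x hx
    simp only [Finset.mem_sdiff, Finset.mem_filter, not_and] at hx ⊢
    exact ⟨hx.1, mem_Rset_of_not_hasPeriodicWindow (mem_words.mp hx.1) (hx.2 hx.1)⟩
  have hsdiff := card_le_card hgood
  rw [card_sdiff_of_subset (Finset.filter_subset _ _), card_words] at hsdiff
  have hbad := card_filter_hasPeriodicWindow_add_le hℓt h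
  omega

theorem stmt13_general (n : ℕ) (P : ℕ) (hP : P = 3 * Nat.clog 2 n + 12) :
    ∃ (c : ZMod (1 + P)) (d : ZMod 2),
      (2 : ℝ)^(n - 1) / (2 * (1 + (P : ℝ))) ≤
        ({x : List Bool | x ∈ Rset n 3 (P / 3) ∧
            ((invNum x : ℕ) : ZMod (1 + P)) = c ∧
            ((x.count true : ℕ) : ZMod 2) = d}).ncard := by
  classical
  have : NeZero (1 + P) := ⟨by omega⟩
  have hcount : 2 ^ (n - 1) ≤ #((words n).filter (· ∈ Rset n 3 (P / 3))) := by
    refine two_pow_pred_le_card_Rset (by omega) ?_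
    rw [show P / 3 = Nat.clog 2 n + 4 by omega, pow_add 2 (Nat.clog 2 n)]
    exact Nat.mul_le_mul_right (2 ^ 4) (Nat.le_pow_clog one_lt_two n)
  obtain ⟨⟨c, d⟩, -, hfiber⟩ := exists_le_card_fiber_of_nsmul_le_card_of_maps_to
    (f := fun x => ((invNum x : ZMod (1 + P)), (x.count true : ZMod 2)))
    (fun _ _ => mem_univ _) univ_nonempty
    (b := (2 : ℝ) ^ (n - 1) / (2 * (1 + (P : ℝ)))) (by
      rw [card_univ, Fintype.card_prod, ZMod.card, ZMod.card, nsmul_eq_mul]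
      push_cast
      field_simp
      exact_mod_cast hcount)
  refine ⟨c, d, hfiber.trans_eq ?_⟩
  norm_cast
  rw [← Set.ncard_coe_finset]
  congr 1
  ext x
  simp only [Finset.coe_filter, Set.mem_ofPred_eq, Finset.mem_filter, mem_words, Prod.ext_iff]
  exact and_congr_left' (and_iff_right_of_imp And.left)

theorem stmt13 (n : ℕ) (hn : 4 ≤ n) (P : ℕ) (hP : P = 3 * Nat.clog 2 n + 12) :
    ∃ (c : ZMod (1 + P)) (d : ZMod 2),
      (2 : ℝ)^(n - 1) / (2 * (1 + (P : ℝ))) ≤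
        ({x : List Bool | x ∈ Rset n 3 (P / 3) ∧
            ((invNum x : ℕ) : ZMod (1 + P)) = c ∧
            ((x.count true : ℕ) : ZMod 2) = d}).ncard :=
  stmt13_general n P hP
end

section
/- Let x = u a d b w and y = u ā e b̄ w be distinct binary sequences of length n, where u, w, d, e ∈ {0,1}*, |d| = |e|, and a, b ∈ {0,1}. If I_1(x) ∩ I_1(y) = ∅, then I_2(x) ∩ I_2(y) = { u s w : s ∈ I_2(a d b) ∩ I_2(ā e b̄) }; in particular, |I_2(x) ∩ I_2(y)| = |I_2(a d b) ∩ I_2(ā e b̄)|. -/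
open List

/-!
Let `x = u X w`, `y = u Y w` with `I_t(x) ∩ I_t(y) = ∅`. Then `x` and `y` have no common
supersequence of length `≤ |x| + t` (a shorter one could be padded up to that length), so a
common supersequence `z` of length `|x| + t + 1` is a shortest one. Such a `z` must begin with the
first symbol of `u`: otherwise dropping its first symbol leaves a shorter common supersequence.
Peeling `u` off symbol by symbol, and then `w` by the same argument on reversed words, leaves
`z = u s w` with `s` a common supersequence of `X` and `Y`.
-/

namespace List

variable {α : Type*}

theorem exists_eq_append_of_shortest_common_supersequence {u X Y z : List α}
    (hX : u ++ X <+ z) (hY : u ++ Y <+ z)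
    (hmin : ∀ v, u ++ X <+ v → u ++ Y <+ v → z.length ≤ v.length) :
    ∃ s, z = u ++ s ∧ X <+ s ∧ Y <+ s := by
  induction u generalizing z with
  | nil => exact ⟨z, rfl, hX, hY⟩
  | cons c u ih =>
    obtain _ | ⟨c', z⟩ := z
    · simp at hX
    obtain rfl | hc := eq_or_ne c c'
    · obtain ⟨s, rfl, hs⟩ := ih (cons_sublist_cons.mp hX) (cons_sublist_cons.mp hY)
        fun v hXv hYv => by simpa using hmin (c :: v) (hXv.cons_cons c) (hYv.cons_cons c)
      exact ⟨s, rfl, hs⟩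
    · have := hmin z (hX.of_cons_of_ne hc) (hY.of_cons_of_ne hc)
      simp at this

theorem exists_eq_append_append_of_shortest_common_supersequence {u X Y w z : List α}
    (hX : u ++ X ++ w <+ z) (hY : u ++ Y ++ w <+ z)
    (hmin : ∀ v, u ++ X ++ w <+ v → u ++ Y ++ w <+ v → z.length ≤ v.length) :
    ∃ s, z = u ++ s ++ w ∧ X <+ s ∧ Y <+ s := by
  simp only [append_assoc] at hX hY hmin
  obtain ⟨r, rfl, hXr, hYr⟩ := exists_eq_append_of_shortest_common_supersequence hX hY hmin
  have hminRev : ∀ v, w.reverse ++ X.reverse <+ v → w.reverse ++ Y.reverse <+ v →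
      r.reverse.length ≤ v.length := by
    intro v hXv hYv
    simpa using hmin (u ++ v.reverse) (by simpa using hXv.reverse.append_left u)
      (by simpa using hYv.reverse.append_left u)
  obtain ⟨s, hs, hXs, hYs⟩ := exists_eq_append_of_shortest_common_supersequence
    (by simpa using hXr.reverse) (by simpa using hYr.reverse) hminRev
  refine ⟨s.reverse, ?_, by simpa using hXs.reverse, by simpa using hYs.reverse⟩
  rw [← reverse_reverse r, hs]
  simp

end List

open List

theorem lt_length_of_insBall_inter_eq_empty {t : ℕ} {x y v : List Bool}
    (h : insBall t x ∩ insBall t y = ∅) (hxy : x.length = y.length)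
    (hx : x <+ v) (hy : y <+ v) : x.length + t < v.length := by
  by_contra! hv
  let v' := v ++ replicate (x.length + t - v.length) false
  have hv' : v'.length = x.length + t := by simp only [v', length_append, length_replicate]; omega
  have : v' ∈ insBall t x ∩ insBall t y :=
    ⟨⟨hv', hx.trans (sublist_append_left _ _)⟩, ⟨hxy ▸ hv', hy.trans (sublist_append_left _ _)⟩⟩
  simp [h] at this

theorem insBall_succ_inter_eq_image {t : ℕ} {u X Y w : List Bool}
    (h : insBall t (u ++ X ++ w) ∩ insBall t (u ++ Y ++ w) = ∅) :
    insBall (t + 1) (u ++ X ++ w) ∩ insBall (t + 1) (u ++ Y ++ w) =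
      (fun s => u ++ s ++ w) '' (insBall (t + 1) X ∩ insBall (t + 1) Y) := by
  ext z
  constructor
  · rintro ⟨⟨hzX, hX⟩, hzY, hY⟩
    have hXY : (u ++ X ++ w).length = (u ++ Y ++ w).length := by omega
    obtain ⟨s, rfl, hXs, hYs⟩ := exists_eq_append_append_of_shortest_common_supersequence hX hY
      fun v hXv hYv => by have := lt_length_of_insBall_inter_eq_empty h hXY hXv hYv; omega
    simp only [length_append] at hzX hzY
    exact ⟨s, ⟨⟨by omega, hXs⟩, by omega, hYs⟩, rfl⟩
  · rintro ⟨s, ⟨⟨hsX, hX⟩, hsY, hY⟩, rfl⟩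
    refine ⟨⟨?_, (hX.append_left u).append_right w⟩, ?_, (hY.append_left u).append_right w⟩ <;>
      simp only [length_append] at hsX hsY ⊢ <;> omega

theorem stmt14_general (u w d e : List Bool) (a b : Bool)
    (x y : List Bool)
    (hx : x = u ++ [a] ++ d ++ [b] ++ w)
    (hy : y = u ++ [!a] ++ e ++ [!b] ++ w)
    (h1 : insBall 1 x ∩ insBall 1 y = ∅) :
    insBall 2 x ∩ insBall 2 y =
      (fun s => u ++ s ++ w) ''
        (insBall 2 ([a] ++ d ++ [b]) ∩ insBall 2 ([!a] ++ e ++ [!b])) ∧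
    (insBall 2 x ∩ insBall 2 y).ncard =
      (insBall 2 ([a] ++ d ++ [b]) ∩ insBall 2 ([!a] ++ e ++ [!b])).ncard := by
  obtain rfl : x = u ++ ([a] ++ d ++ [b]) ++ w := by simp [hx]
  obtain rfl : y = u ++ ([!a] ++ e ++ [!b]) ++ w := by simp [hy]
  have hball := insBall_succ_inter_eq_image h1
  refine ⟨hball, ?_⟩
  rw [hball]
  exact Set.ncard_image_of_injective _
    ((append_left_injective w).comp (append_right_injective u))

theorem stmt14 (n : ℕ) (u w d e : List Bool) (a b : Bool)
    (hde : d.length = e.length) (x y : List Bool)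
    (hx : x = u ++ [a] ++ d ++ [b] ++ w)
    (hy : y = u ++ [!a] ++ e ++ [!b] ++ w)
    (hlen : x.length = n) (hne : x ≠ y)
    (h1 : insBall 1 x ∩ insBall 1 y = ∅) :
    insBall 2 x ∩ insBall 2 y =
      (fun s => u ++ s ++ w) ''
        (insBall 2 ([a] ++ d ++ [b]) ∩ insBall 2 ([!a] ++ e ++ [!b])) ∧
    (insBall 2 x ∩ insBall 2 y).ncard =
      (insBall 2 ([a] ++ d ++ [b]) ∩ insBall 2 ([!a] ++ e ++ [!b])).ncard :=
  stmt14_general u w d e a b x y hx hy h1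
end

section
/- Let a, b ∈ {0,1} and d, e ∈ {0,1}* with |d| = |e|. Suppose d b and ā e are Type-A confusable, witnessed by a decomposition d b = α w β and ā e = α w̄ β with w an alternating sequence of length at least 1, and suppose in addition that a d and e b̄ are Type-B confusable. Then there exist p₁, p₂, p₃, p₁′, p₂′, p₃′ ∈ {0,1}* such that α = p₁′ p₂′ p₃′ and β = p₁ p₂ p₃, where each of p₁, p₂, p₃, p₁′, p₂′, p₃′ has period at most 3. -/
open List

/-! Put `x = d b = α w β` and `y = ā e = α w̄ β`; these agree outside the block `w`. Of the Type-B
pair `a d`, `e b̄`, one word arises from the other by deleting a letter and inserting another, so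
they agree up to a shift, which translates into `x[j] = y[j + s]` with `s = 2` before the first
edit point, `s ∈ {1, 3}` between the two edit points and `s = 2` after them. On `α` and on `β`
we may replace `y` by `x`, so there `x` has local period 2, `s`, 2 on three consecutive
intervals, which cut each of `α` and `β` into three pieces of period at most 3. -/

theorem List.getD_extract {ι : Type*} (l : List ι) (x : ι) {lo hi i : ℕ} (h : lo + i < hi) :
    (l.extract lo hi).getD i x = l.getD (lo + i) x := by
  simp [getD_eq_getElem?_getD, List.getElem?_drop, show i < hi - lo by omega]

theorem List.extract_append_extract {ι : Type*} (l : List ι) {i j k : ℕ} (hij : i ≤ j)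
    (hjk : j ≤ k) : l.extract i j ++ l.extract j k = l.extract i k := by
  simp only [extract_eq_take_drop]
  rw [show k - i = (j - i) + (k - j) by omega, take_add, drop_drop, Nat.add_sub_cancel' hij]

theorem List.getD_append_append_of_outside {ι : Type*} {l₁ m m' l₂ : List ι} (x : ι) {i : ℕ}
    (hm : m'.length = m.length) (hi : i < l₁.length ∨ l₁.length + m.length ≤ i) :
    (l₁ ++ m' ++ l₂).getD i x = (l₁ ++ m ++ l₂).getD i x := by
  rcases hi with hi | hi
  · simp only [append_assoc, getD_append _ _ _ _ hi]
  · rw [getD_append_right (l₁ ++ m') _ _ _ (by simp; omega),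
      getD_append_right (l₁ ++ m) _ _ _ (by simp; omega)]
    simp [hm]

def ShiftEqOn (x y : List Bool) (k lo hi : ℕ) : Prop :=
  ∀ j, lo ≤ j → j + k < hi → x.getD j false = y.getD (j + k) false

namespace ShiftEqOn

variable {x y : List Bool} {k lo hi lo' hi' : ℕ}

theorem mono (h : ShiftEqOn x y k lo hi) (hlo : lo ≤ lo') (hhi : hi' ≤ hi) :
    ShiftEqOn x y k lo' hi' :=
  fun j hj hjk => h j (by omega) (by omega)

theorem isPeriodOf_extract (h : ShiftEqOn x x k lo hi) : IsPeriodOf k (x.extract lo hi) := by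
  intro i hi
  simp only [extract_eq_take_drop, length_take, length_drop] at hi
  rw [List.getD_extract _ _ (by omega), List.getD_extract _ _ (by omega), ← Nat.add_assoc]
  exact h _ (by omega) (by omega)

end ShiftEqOn

theorem shiftEqOn_of_eq_append {x y p s q p' q' : List Bool} {k : ℕ} (hx : x = p ++ s ++ q)
    (hy : y = p' ++ s ++ q') (hp : p'.length = p.length + k) :
    ShiftEqOn x y k p.length (p'.length + s.length) := by
  intro j hj hjk
  subst hx hy
  rw [getD_append (p ++ s) _ _ _ (by simp; omega), getD_append (p' ++ s) _ _ _ (by simp; omega),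
    getD_append_right _ _ _ _ hj, getD_append_right _ _ _ _ (by omega)]
  congr 1
  omega

theorem shiftEqOn_tail_of_eq_append {x y p s q p' q' : List Bool} {k : ℕ} (hx : x = p ++ s ++ q)
    (hy : y = p' ++ s ++ q') (hp : p'.length = p.length + k) :
    ShiftEqOn x.tail y (k + 1) (p.length - 1) (p'.length + s.length) := fun j hj hjk => by
  rw [show j + (k + 1) = j + 1 + k by omega,
    ← shiftEqOn_of_eq_append hx hy hp (j + 1) (by omega) (by omega)]
  simp [getD_eq_getElem?_getD]

theorem exists_eq_append_append_periodLe (x : List Bool) {lo hi c₁ c₂ k ℓ : ℕ} (hlo : lo ≤ hi)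
    (hc : c₁ ≤ c₂) (hk : 1 ≤ k) (hkℓ : k ≤ ℓ) (h2ℓ : 2 ≤ ℓ)
    (h₁ : ShiftEqOn x x 2 lo (min c₁ hi)) (h₂ : ShiftEqOn x x k (max lo c₁) (min c₂ hi))
    (h₃ : ShiftEqOn x x 2 (max lo c₂) hi) :
    ∃ p₁ p₂ p₃, x.extract lo hi = p₁ ++ p₂ ++ p₃ ∧
      PeriodLe p₁ ℓ ∧ PeriodLe p₂ ℓ ∧ PeriodLe p₃ ℓ := by
  set m₁ := max lo (min c₁ hi)
  set m₂ := max lo (min c₂ hi)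
  refine ⟨x.extract lo m₁, x.extract m₁ m₂, x.extract m₂ hi, ?_,
    ⟨2, by norm_num, h2ℓ, ?_⟩, ⟨k, hk, hkℓ, ?_⟩, ⟨2, by norm_num, h2ℓ, ?_⟩⟩
  · rw [x.extract_append_extract (by omega) (by omega),
      x.extract_append_extract (by omega) (by omega)]
  · exact ShiftEqOn.isPeriodOf_extract fun j hj hjk => h₁ j hj (by omega)
  · exact ShiftEqOn.isPeriodOf_extract fun j hj hjk => h₂ j (by omega) (by omega)
  · exact ShiftEqOn.isPeriodOf_extract fun j hj hjk => h₃ j (by omega) hjk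

/-- Shifts are measured from `A.tail`, so shift `1` means that `A` and `B` agree there. -/
theorem TypeB.exists_shiftEqOn_tail {A B : List Bool} (h : TypeB A B) :
    ∃ c₁ c₂ k, c₁ ≤ c₂ ∧ k ≤ 2 ∧ ShiftEqOn A.tail B 1 0 c₁ ∧ ShiftEqOn A.tail B k c₁ c₂ ∧
      ShiftEqOn A.tail B 1 c₂ B.length := by
  obtain ⟨u, v, t, c, f, hAB⟩ := h
  set z := (!c) :: (v ++ [f])
  have hP : u ++ [c, !c] ++ v ++ [f] ++ t = u ++ c :: z ++ t := by simp [z]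
  have hQ : u ++ [!c] ++ v ++ [f, !f] ++ t = u ++ z ++ (!f) :: t := by simp [z]
  rw [hP, hQ, Set.pair_eq_pair_iff] at hAB
  refine ⟨u.length, u.length + z.length, ?_⟩
  rcases hAB with ⟨rfl, rfl⟩ | ⟨rfl, rfl⟩
  · refine ⟨0, by omega, by omega, ?_, ?_, ?_⟩
    · exact (shiftEqOn_tail_of_eq_append (p := []) (p' := []) (s := u) (q := c :: z ++ t)
        (q' := z ++ (!f) :: t) (by simp) (by simp) rfl).mono le_rfl (by simp)
    · refine (shiftEqOn_of_eq_append (p := (u ++ [c]).tail) (s := z) (q := t) (p' := u)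
        (q' := (!f) :: t) (k := 0) ?_ (by simp) (by simp)).mono (by simp) le_rfl
      cases u <;> simp
    · refine (shiftEqOn_tail_of_eq_append (p := u ++ c :: z) (p' := u ++ z ++ [!f]) (s := t)
        (q := []) (q' := []) (by simp) (by simp) (by simp)).mono (by simp) (by simp; omega)
  · refine ⟨2, by omega, by omega, ?_, ?_, ?_⟩
    · exact (shiftEqOn_tail_of_eq_append (p := []) (p' := []) (s := u) (q := z ++ (!f) :: t)
        (q' := c :: z ++ t) (by simp) (by simp) rfl).mono le_rfl (by simp)
    · refine (shiftEqOn_tail_of_eq_append (p := u) (p' := u ++ [c]) (s := z) (q := (!f) :: t)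
        (q' := t) (by simp) (by simp) (by simp)).mono (by omega) (by simp)
    · refine (shiftEqOn_tail_of_eq_append (p := u ++ z ++ [!f]) (p' := u ++ c :: z) (s := t)
        (q := []) (q' := []) (by simp) (by simp) (by simp)).mono (by simp) (by simp; omega)

theorem shiftEqOn_of_confusable {a b c : Bool} {d e α w w' β : List Bool} {k lo hi L H : ℕ}
    (h₁ : d ++ [b] = α ++ w ++ β) (h₂ : [a] ++ e = α ++ w' ++ β) (hw : w'.length = w.length)
    (h : ShiftEqOn d (e ++ [c]) k lo hi) (hlo : lo ≤ L) (hH : H ≤ hi + 1) (he : H ≤ e.length + 1)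
    (hout : H ≤ α.length ∨ α.length + w.length ≤ L) :
    ShiftEqOn (α ++ w ++ β) (α ++ w ++ β) (k + 1) L H := fun j hj hjk => by
  have hde : d.length = e.length := by
    have h₁' := congrArg length h₁
    have h₂' := congrArg length h₂
    simp only [length_append, length_singleton] at h₁' h₂'
    omega
  calc (α ++ w ++ β).getD j false
      = d.getD j false := by rw [← h₁, getD_append _ _ _ _ (by omega)]
    _ = e.getD (j + k) false := by rw [h j (by omega) (by omega), getD_append _ _ _ _ (by omega)]
    _ = (α ++ w' ++ β).getD (j + (k + 1)) false := by rw [← h₂]; rfl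
    _ = (α ++ w ++ β).getD (j + (k + 1)) false := getD_append_append_of_outside _ hw (by omega)

theorem stmt16_general (a b : Bool) (d e : List Bool)
    (α β w : List Bool)
    (h1 : d ++ [b] = α ++ w ++ β) (h2 : [!a] ++ e = α ++ bcompl w ++ β)
    (hB : TypeB ([a] ++ d) (e ++ [!b])) :
    ∃ p1 p2 p3 p1' p2' p3' : List Bool,
      α = p1' ++ p2' ++ p3' ∧ β = p1 ++ p2 ++ p3 ∧
      PeriodLe p1 3 ∧ PeriodLe p2 3 ∧ PeriodLe p3 3 ∧
      PeriodLe p1' 3 ∧ PeriodLe p2' 3 ∧ PeriodLe p3' 3 := by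
  obtain ⟨c₁, c₂, k, hc, hk, hu, hz, ht⟩ := hB.exists_shiftEqOn_tail
  have hw : (bcompl w).length = w.length := length_map _
  have hlen := congrArg length h2
  simp only [length_append, length_singleton, hw] at hlen ht
  obtain ⟨p₁', p₂', p₃', hα, hp₁', hp₂', hp₃'⟩ := exists_eq_append_append_periodLe (α ++ w ++ β)
    (lo := 0) (hi := α.length) (k := k + 1) (ℓ := 3) (Nat.zero_le _) hc (by omega) (by omega)
    (by norm_num)
    (shiftEqOn_of_confusable h1 h2 hw hu (by omega) (by omega) (by omega) (by omega))
    (shiftEqOn_of_confusable h1 h2 hw hz (by omega) (by omega) (by omega) (by omega))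
    (shiftEqOn_of_confusable h1 h2 hw ht (by omega) (by omega) (by omega) (by omega))
  obtain ⟨p₁, p₂, p₃, hβ, hp₁, hp₂, hp₃⟩ := exists_eq_append_append_periodLe (α ++ w ++ β)
    (lo := α.length + w.length) (hi := α.length + w.length + β.length) (k := k + 1) (ℓ := 3)
    (by omega) hc (by omega) (by omega) (by norm_num)
    (shiftEqOn_of_confusable h1 h2 hw hu (by omega) (by omega) (by omega) (by omega))
    (shiftEqOn_of_confusable h1 h2 hw hz (by omega) (by omega) (by omega) (by omega))
    (shiftEqOn_of_confusable h1 h2 hw ht (by omega) (by omega) (by omega) (by omega))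
  refine ⟨p₁, p₂, p₃, p₁', p₂', p₃', ?_, ?_, hp₁, hp₂, hp₃, hp₁', hp₂', hp₃'⟩
  · rw [← hα]; simp
  · rw [← hβ]; simp

theorem stmt16 (a b : Bool) (d e : List Bool) (hde : d.length = e.length)
    (α β w : List Bool) (hw : IsAlt w)
    (h1 : d ++ [b] = α ++ w ++ β) (h2 : [!a] ++ e = α ++ bcompl w ++ β)
    (hB : TypeB ([a] ++ d) (e ++ [!b])) :
    ∃ p1 p2 p3 p1' p2' p3' : List Bool,
      α = p1' ++ p2' ++ p3' ∧ β = p1 ++ p2 ++ p3 ∧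
      PeriodLe p1 3 ∧ PeriodLe p2 3 ∧ PeriodLe p3 3 ∧
      PeriodLe p1' 3 ∧ PeriodLe p2' 3 ∧ PeriodLe p3' 3 :=
  stmt16_general a b d e α β w h1 h2 hB
end
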